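/- arXiv:1912.07147 — 5 statements merged into one kernel-verified Lean document; each statement's English description precedes it below -/
import Mathlib

section
/- Let G be a 2-connected graph, and let P be a path in G of length at least three such that every internal vertex of P has degree two in G. Then for any rainbow 2-connected edge-colouring of G, the edges of P must receive pairwise distinct colours (i.e., P is a rainbow path). -/
open SimpleGraph

/-- A walk is rainbow (w.r.t. an edge-colouring `col`) if its edges receive
pairwise distinct colours. -/
def IsRainbowWalk {V α : Type*} {G : SimpleGraph V} {u v : V} (col : Sym2 V → α)
    (p : G.Walk u v) : Prop :=
  (p.edges.map col).Nodup

/-- An edge-colouring is rainbow 2-connected if every two distinct vertices are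
connected by two internally vertex-disjoint rainbow paths. -/
def RainbowTwoConnectedColouring {V α : Type*} (G : SimpleGraph V) (col : Sym2 V → α) : Prop :=
  ∀ u v : V, u ≠ v → ∃ p q : G.Walk u v, p.IsPath ∧ q.IsPath ∧ p ≠ q ∧
    IsRainbowWalk col p ∧ IsRainbowWalk col q ∧
    ∀ w : V, w ∈ p.support → w ∈ q.support → w = u ∨ w = v

/-- The rainbow 2-connection number: the least number of colours in a rainbow
2-connected colouring. -/
noncomputable def rc2 {V : Type*} (G : SimpleGraph V) : ℕ :=
  sInf {r : ℕ | ∃ col : Sym2 V → Fin r, RainbowTwoConnectedColouring G col}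

/-- A graph is 2-connected if it has at least 3 vertices and deleting any single
vertex leaves a connected graph. -/
def TwoConnected {V : Type*} [Fintype V] (G : SimpleGraph V) : Prop :=
  3 ≤ Fintype.card V ∧ ∀ v : V, (G.induce ({v}ᶜ : Set V)).Connected

/-- `t2 n r`: minimum number of edges of a 2-connected graph on `n` vertices
with rainbow 2-connection number at most `r`. -/
noncomputable def t2 (n r : ℕ) : ℕ :=
  sInf {m : ℕ | ∃ G : SimpleGraph (Fin n), TwoConnected G ∧ rc2 G ≤ r ∧ G.edgeSet.ncard = m}

/-- `s2 n r`: maximum number of edges of a 2-connected graph on `n` vertices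
with rainbow 2-connection number at least `r`. -/
noncomputable def s2 (n r : ℕ) : ℕ :=
  sSup {m : ℕ | ∃ G : SimpleGraph (Fin n), TwoConnected G ∧ r ≤ rc2 G ∧ G.edgeSet.ncard = m}

/-!
A stretch of degree-two vertices forces paths: a path entering it at one end cannot leave it
before the other end. Let `P = u w ⋯ z v`. Of the two internally disjoint rainbow `w`–`v` paths,
the one avoiding `u` is therefore the segment `w ⋯ z v` of `P`, which is thus rainbow; likewise
`u w ⋯ z` is rainbow. Finally, of the two distinct rainbow `w`–`z` paths, one is not the segment
`w ⋯ z`, so it must use both end edges `uw` and `zv` of `P`, whose colours therefore differ.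
-/

namespace SimpleGraph

variable {V : Type*} {G : SimpleGraph V}

theorem eq_or_eq_of_degree_eq_two [G.LocallyFinite] {y x a b : V} (hy : G.degree y = 2)
    (hx : G.Adj y x) (ha : G.Adj y a) (hxa : x ≠ a) (hb : G.Adj y b) : b = x ∨ b = a := by
  classical
  have hsub : ({x, a} : Finset V) ⊆ G.neighborFinset y := by
    simp [Finset.insert_subset_iff, hx, ha]
  have hnbr : ({x, a} : Finset V) = G.neighborFinset y :=
    Finset.eq_of_subset_of_card_le hsub (by rw [card_neighborFinset_eq_degree, hy,
      Finset.card_pair hxa])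
  simpa [← hnbr] using (G.mem_neighborFinset y b).2 hb

namespace Walk

theorem exists_eq_cons_concat {u v : V} (p : G.Walk u v) (hlen : 2 ≤ p.length) :
    ∃ (w z : V) (h : G.Adj u w) (m : G.Walk w z) (h' : G.Adj z v), p = cons h (m.concat h') := by
  obtain _ | ⟨h, _ | ⟨h₂, p₂⟩⟩ := p
  · simp at hlen
  · simp at hlen
  · obtain ⟨z, m, h', hm⟩ := exists_cons_eq_concat h₂ p₂
    exact ⟨_, z, h, m, h', hm ▸ rfl⟩

theorem IsPath.eq_or_mem_edges_of_degree_eq_two [G.LocallyFinite] {y u x : V} {P : G.Walk y u}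
    (hP : P.IsPath) (hxy : G.Adj x y) (hxP : x ∉ P.support)
    (hdeg : ∀ w ∈ P.support, w ≠ u → G.degree w = 2) {q : G.Walk y u} (hq : q.IsPath) :
    q = P ∨ s(x, y) ∈ q.edges := by
  induction P generalizing x with
  | nil => exact .inl (eq_nil_iff_nil.2 (isPath_iff_nil.1 hq))
  | @cons y a u hya P ih =>
    rw [cons_isPath_iff] at hP
    have hyu : y ≠ u := fun h => hP.2 (h ▸ P.end_mem_support)
    cases q with
    | nil => exact absurd rfl hyu
    | @cons _ b _ hyb r =>
      rw [cons_isPath_iff] at hq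
      have hxa : x ≠ a := fun h => hxP (by simp [h])
      rcases eq_or_eq_of_degree_eq_two (hdeg y (by simp) hyu) hxy.symm hya hxa hyb
        with rfl | rfl
      · exact .inr (by simp [Sym2.eq_swap])
      · refine .inl ?_
        obtain hr | hr := ih hP.1 hya hP.2
          (fun w hw hwu => hdeg w (by simp [hw]) hwu) hq.1
        · rw [hr]
        · exact absurd (r.fst_mem_support_of_mem_edges hr) hq.2

end Walk

end SimpleGraph

open SimpleGraph

theorem isRainbowWalk_reverse_iff {V α : Type*} {G : SimpleGraph V} {u v : V}
    (col : Sym2 V → α) (p : G.Walk u v) : IsRainbowWalk col p.reverse ↔ IsRainbowWalk col p := by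
  simp [IsRainbowWalk, Walk.edges_reverse, List.map_reverse]

namespace RainbowTwoConnectedColouring

variable {V α : Type*} {G : SimpleGraph V} {col : Sym2 V → α}

theorem exists_rainbow_path_not_mem (hcol : RainbowTwoConnectedColouring G col) {y u x : V}
    (hyu : y ≠ u) (hxy : x ≠ y) (hxu : x ≠ u) :
    ∃ q : G.Walk y u, q.IsPath ∧ IsRainbowWalk col q ∧ x ∉ q.support := by
  obtain ⟨q, q', hq, hq', -, hrq, hrq', hdisj⟩ := hcol y u hyu
  by_cases hx : x ∈ q.support
  · exact ⟨q', hq', hrq', fun hx' => (hdisj x hx hx').elim hxy hxu⟩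
  · exact ⟨q, hq, hrq, hx⟩

theorem isRainbowWalk_of_degree_eq_two [G.LocallyFinite]
    (hcol : RainbowTwoConnectedColouring G col)
    {y u x : V} {P : G.Walk y u} (hP : P.IsPath) (hyu : y ≠ u) (hxy : G.Adj x y)
    (hxP : x ∉ P.support) (hdeg : ∀ w ∈ P.support, w ≠ u → G.degree w = 2) :
    IsRainbowWalk col P := by
  obtain ⟨q, hq, hrq, hxq⟩ := hcol.exists_rainbow_path_not_mem hyu hxy.ne
    (fun h => hxP (h ▸ P.end_mem_support))
  obtain rfl | hmem := hP.eq_or_mem_edges_of_degree_eq_two hxy hxP hdeg hq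
  · exact hrq
  · exact absurd (q.fst_mem_support_of_mem_edges hmem) hxq

theorem col_ne_of_degree_eq_two [G.LocallyFinite] (hcol : RainbowTwoConnectedColouring G col)
    {y y' x x' : V} {P : G.Walk y y'} (hP : P.IsPath) (hyy' : y ≠ y')
    (hdeg : ∀ w ∈ P.support, G.degree w = 2) (hxy : G.Adj x y) (hxP : x ∉ P.support)
    (hx'y' : G.Adj x' y') (hx'P : x' ∉ P.support) : col s(x, y) ≠ col s(x', y') := by
  obtain ⟨q, q', hq, hq', hqq', hrq, hrq', -⟩ := hcol y y' hyy'
  obtain ⟨r, hr, hrr, hrP⟩ : ∃ r : G.Walk y y', r.IsPath ∧ IsRainbowWalk col r ∧ r ≠ P := by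
    by_cases h : q = P
    · exact ⟨q', hq', hrq', h ▸ hqq'.symm⟩
    · exact ⟨q, hq, hrq, h⟩
  have hfirst : s(x, y) ∈ r.edges :=
    (hP.eq_or_mem_edges_of_degree_eq_two hxy hxP (fun w hw _ => hdeg w hw) hr).resolve_left hrP
  have hlast : s(x', y') ∈ r.edges := by
    have := hP.reverse.eq_or_mem_edges_of_degree_eq_two hx'y' (by simpa using hx'P)
      (fun w hw _ => hdeg w (by simpa using hw)) hr.reverse
    simpa [Walk.edges_reverse, Walk.reverse_injective.ne hrP] using this
  have hne : s(x, y) ≠ s(x', y') := by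
    have hyx' : y ≠ x' := fun h => hx'P (h ▸ P.start_mem_support)
    simp [hyy', hyx']
  exact fun hc => hne (List.inj_on_of_nodup_map hrr hfirst hlast hc)

theorem isRainbowWalk_cons_concat [G.LocallyFinite] (hcol : RainbowTwoConnectedColouring G col)
    {u w z v : V} (h : G.Adj u w) (m : G.Walk w z) (h' : G.Adj z v)
    (hp : (Walk.cons h (m.concat h')).IsPath) (hm : 0 < m.length)
    (hdeg : ∀ x ∈ m.support, G.degree x = 2) : IsRainbowWalk col (Walk.cons h (m.concat h')) := by
  obtain ⟨⟨hmP, hvm⟩, hum, huv⟩ : (m.IsPath ∧ v ∉ m.support) ∧ u ∉ m.support ∧ u ≠ v := by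
    simpa [Walk.concat_isPath_iff] using hp
  have hwz : w ≠ z := by
    rintro rfl
    exact hm.ne' (Walk.length_eq_zero_iff.2 (Walk.isPath_iff_nil.1 hmP))
  have hsuffix : IsRainbowWalk col (m.concat h') :=
    hcol.isRainbowWalk_of_degree_eq_two (hmP.concat hvm h')
      (fun hwv => hvm (hwv ▸ m.start_mem_support)) h (by simp [hum, huv])
      (fun x hx hxv => hdeg x (by simpa [hxv] using hx))
  have hprefix : IsRainbowWalk col (Walk.cons h m).reverse :=
    hcol.isRainbowWalk_of_degree_eq_two (hmP.cons hum).reverse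
      (fun hzu => hum (hzu ▸ m.end_mem_support)) h'.symm
      (by
        simp only [Walk.support_reverse, List.mem_reverse, Walk.support_cons]
        simp [huv.symm, hvm])
      (fun x hx hxu => hdeg x (by
        simp only [Walk.support_reverse, List.mem_reverse, Walk.support_cons] at hx
        simpa [hxu] using hx))
  have hends : col s(u, w) ≠ col s(v, z) :=
    hcol.col_ne_of_degree_eq_two hmP hwz hdeg h hum h'.symm hvm
  rw [isRainbowWalk_reverse_iff] at hprefix
  simp only [IsRainbowWalk, Walk.edges_cons, Walk.edges_concat, List.map_cons] at hsuffix hprefix ⊢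
  refine List.nodup_cons.2 ⟨?_, hsuffix⟩
  rw [List.concat_eq_append, List.map_append, List.mem_append]
  rintro (hmem | hmem)
  · exact (List.nodup_cons.1 hprefix).1 hmem
  · exact hends (by simpa [Sym2.eq_swap] using hmem)

end RainbowTwoConnectedColouring

theorem stmt0_general {V : Type*} [Fintype V] (G : SimpleGraph V) [DecidableRel G.Adj]
    {u v : V} (p : G.Walk u v) (hp : p.IsPath) (hlen : 3 ≤ p.length)
    (hdeg : ∀ w ∈ p.support, w ≠ u → w ≠ v → G.degree w = 2)
    {α : Type*} (col : Sym2 V → α) (hcol : RainbowTwoConnectedColouring G col) :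
    IsRainbowWalk col p := by
  obtain ⟨w, z, h, m, h', rfl⟩ := p.exists_eq_cons_concat (by omega)
  obtain ⟨⟨-, hv⟩, hu, -⟩ : (m.IsPath ∧ v ∉ m.support) ∧ u ∉ m.support ∧ u ≠ v := by
    simpa [Walk.concat_isPath_iff] using hp
  refine hcol.isRainbowWalk_cons_concat h m h' hp (by simp at hlen; omega) fun x hx => ?_
  exact hdeg x (by simp [hx]) (by rintro rfl; exact hu hx) (by rintro rfl; exact hv hx)

/-- In a 2-connected graph, any path of length ≥ 3 all of whose
internal vertices have degree two must be rainbow under any rainbow 2-connected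
colouring. -/
theorem stmt0 {V : Type*} [Fintype V] [DecidableEq V] (G : SimpleGraph V) [DecidableRel G.Adj]
    (hG : TwoConnected G) {u v : V} (p : G.Walk u v) (hp : p.IsPath) (hlen : 3 ≤ p.length)
    (hdeg : ∀ w ∈ p.support, w ≠ u → w ≠ v → G.degree w = 2)
    {α : Type*} (col : Sym2 V → α) (hcol : RainbowTwoConnectedColouring G col) :
    IsRainbowWalk col p :=
  stmt0_general G p hp hlen hdeg col hcol
end

section
/- For every integer a ≥ 4 and every integer n with 2^{a−2} + a − 1 ≤ n ≤ 2^{a−1} + a − 1, there exists a 2-connected graph G on n vertices with exactly C(a,2) + a(n−a) edges (obtained from the complete bipartite graph with classes A of size a and B of size n−a by adding all edges inside A) such that rc₂(G) = 2. -/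
/-!
Colour every edge inside `A` with `0`, give each `b ∉ A` a codeword `code b ⊆ A`, and colour the
edge `ib` by whether `i ∈ code b`. Two vertices of `A` are joined directly and through a vertex
`b` whose codeword separates them; `i ∈ A` and `b ∉ A` are joined directly and through some
`w ∈ code b` other than `i` (colours `0`, `1`), which needs codewords of weight at least two; two
vertices outside `A` are joined through two coordinates in which their codewords differ, which
needs minimum distance two. The nonempty even subsets of `A` form such a code: there are
`2 ^ (a - 1) - 1` of them, and the `a - 1` pairs `{i₀, k}` among them already separate all pairs
of `A`, which fits into `n - a ≥ 2 ^ (a - 2) - 1` codewords. One colour never suffices, since a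
rainbow path then has a single edge and the two paths would coincide.
-/

open SimpleGraph

open Finset SimpleGraph
open scoped symmDiff

section Rainbow

variable {V α : Type*} {G : SimpleGraph V}

def HasTwoRainbowPaths (G : SimpleGraph V) (col : Sym2 V → α) (u v : V) : Prop :=
  ∃ p q : G.Walk u v, p.IsPath ∧ q.IsPath ∧ p ≠ q ∧
    IsRainbowWalk col p ∧ IsRainbowWalk col q ∧
    ∀ w : V, w ∈ p.support → w ∈ q.support → w = u ∨ w = v

lemma hasTwoRainbowPaths_of_adj_of_adj_adj {col : Sym2 V → α} {u v w : V} (huv : G.Adj u v)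
    (huw : G.Adj u w) (hwv : G.Adj w v) (hcol : col s(u, w) ≠ col s(w, v)) :
    HasTwoRainbowPaths G col u v := by
  refine ⟨huv.toWalk, .cons huw hwv.toWalk, by simp [huv.ne], by simp [huw.ne, hwv.ne, huv.ne],
    fun h => by simpa using congrArg Walk.length h, by simp [IsRainbowWalk],
    by simp [IsRainbowWalk, hcol], fun x hx _ => by simpa using hx⟩

lemma hasTwoRainbowPaths_of_adj_adj_of_adj_adj {col : Sym2 V → α} {u v w w' : V} (huv : u ≠ v)
    (hww' : w ≠ w') (huw : G.Adj u w) (hwv : G.Adj w v) (huw' : G.Adj u w') (hw'v : G.Adj w' v)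
    (hcol : col s(u, w) ≠ col s(w, v)) (hcol' : col s(u, w') ≠ col s(w', v)) :
    HasTwoRainbowPaths G col u v := by
  refine ⟨.cons huw hwv.toWalk, .cons huw' hw'v.toWalk, by simp [huw.ne, hwv.ne, huv],
    by simp [huw'.ne, hw'v.ne, huv], fun h => hww' ?_, by simp [IsRainbowWalk, hcol],
    by simp [IsRainbowWalk, hcol'], fun x hx hx' => ?_⟩
  · simpa using congrArg Walk.support h
  · simp only [Adj.toWalk, Walk.support_cons, Walk.support_nil, List.mem_cons] at hx hx'
    grind [huw.ne, hwv.ne]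

lemma IsRainbowWalk.length_le_card [Fintype α] {col : Sym2 V → α} {u v : V} {p : G.Walk u v}
    (hp : IsRainbowWalk col p) : p.length ≤ Fintype.card α := by
  simpa [IsRainbowWalk, ← Walk.length_edges] using List.Nodup.length_le_card hp

lemma SimpleGraph.Walk.eq_of_length_eq_one {u v : V} {p q : G.Walk u v} (hp : p.length = 1)
    (hq : q.length = 1) : p = q := by
  cases p with
  | nil => simp at hp
  | cons _ p' =>
    cases q with
    | nil => simp at hq
    | cons _ q' =>
      cases p' with
      | cons _ _ => simp at hp
      | nil =>
        cases q' with
        | cons _ _ => simp at hq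
        | nil => rfl

lemma two_le_of_rainbowTwoConnectedColouring [Nontrivial V] {r : ℕ} {col : Sym2 V → Fin r}
    (h : RainbowTwoConnectedColouring G col) : 2 ≤ r := by
  obtain ⟨u, v, huv⟩ := exists_pair_ne V
  obtain ⟨p, q, -, -, hpq, hp, hq, -⟩ := h u v huv
  by_contra! hr
  have length_eq_one {w : G.Walk u v} (hw : IsRainbowWalk col w) : w.length = 1 := by
    have := hw.length_le_card
    have := mt (Walk.eq_of_length_eq_zero (p := w)) huv
    simp only [Fintype.card_fin] at *
    omega
  exact hpq (Walk.eq_of_length_eq_one (length_eq_one hp) (length_eq_one hq))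

lemma rc2_eq_two [Nontrivial V] {col : Sym2 V → Fin 2} (h : RainbowTwoConnectedColouring G col) :
    rc2 G = 2 :=
  le_antisymm (Nat.sInf_le ⟨col, h⟩)
    (le_csInf ⟨2, col, h⟩ fun _ ⟨_, hc⟩ => two_le_of_rainbowTwoConnectedColouring hc)

end Rainbow

section CompleteSplit

variable {V : Type*}

def completeSplit (A : Set V) : SimpleGraph V := fromRel fun u _ => u ∈ A

@[simp]
lemma completeSplit_adj {A : Set V} {u v : V} :
    (completeSplit A).Adj u v ↔ u ≠ v ∧ (u ∈ A ∨ v ∈ A) := by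
  simp [completeSplit]

lemma completeSplit_adj_of_mem_left {A : Set V} {u v : V} (hu : u ∈ A) (huv : u ≠ v) :
    (completeSplit A).Adj u v :=
  completeSplit_adj.2 ⟨huv, .inl hu⟩

lemma completeSplit_adj_of_mem_right {A : Set V} {u v : V} (hv : v ∈ A) (huv : u ≠ v) :
    (completeSplit A).Adj u v :=
  completeSplit_adj.2 ⟨huv, .inr hv⟩

lemma twoConnected_completeSplit [Fintype V] {A : Finset V} (hV : 3 ≤ Fintype.card V)
    (hA : 1 < #A) : TwoConnected (completeSplit (A : Set V)) := by
  refine ⟨hV, fun v => (connected_iff _).2 ?_⟩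
  obtain ⟨k, hkA, hkv⟩ := exists_mem_ne hA v
  let k' : ({v}ᶜ : Set V) := ⟨k, hkv⟩
  have reach_k (x : ({v}ᶜ : Set V)) :
      ((completeSplit (A : Set V)).induce {v}ᶜ).Reachable x k' := by
    by_cases hx : x = k'
    · rw [hx]
    · have hk' : (k' : V) ∈ (A : Set V) := hkA
      exact (induce_adj.2 <| completeSplit_adj_of_mem_right hk' (hx <| Subtype.ext ·)).reachable
  exact ⟨fun x y => (reach_k x).trans (reach_k y).symm, ⟨k'⟩⟩

lemma degree_completeSplit [Fintype V] [DecidableEq V] (A : Finset V)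
    [DecidableRel (completeSplit (A : Set V)).Adj] (u : V) :
    (completeSplit (A : Set V)).degree u = if u ∈ A then Fintype.card V - 1 else #A := by
  split_ifs with hu
  · rw [← card_neighborFinset_eq_degree, ← card_univ, ← card_erase_of_mem (mem_univ u)]
    congr 1; ext v; simp [hu, eq_comm]
  · rw [← card_neighborFinset_eq_degree]
    congr 1; ext v; simp only [mem_neighborFinset, completeSplit_adj, Finset.mem_coe]
    constructor
    · rintro ⟨-, h | h⟩ <;> tauto
    · exact fun hv => ⟨fun h => hu (h ▸ hv), Or.inr hv⟩

lemma ncard_edgeSet_completeSplit [Fintype V] [DecidableEq V] (A : Finset V) :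
    (completeSplit (A : Set V)).edgeSet.ncard = (#A).choose 2 + #A * #Aᶜ := by
  classical
  have hsum := sum_degrees_eq_twice_card_edges (completeSplit (A : Set V))
  rw [← sum_add_sum_compl A] at hsum
  simp only [degree_completeSplit] at hsum
  rw [sum_congr rfl fun u hu => if_pos hu, sum_congr rfl fun u hu => if_neg (mem_compl.1 hu),
    sum_const, sum_const, smul_eq_mul, smul_eq_mul, card_compl] at hsum
  rw [← coe_edgeFinset, Set.ncard_coe_finset, card_compl]
  obtain ⟨b, hb⟩ : ∃ b, Fintype.card V = #A + b :=
    ⟨_, (Nat.add_sub_of_le (card_le_univ A)).symm⟩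
  rw [hb, Nat.add_sub_cancel_left] at hsum ⊢
  have hchoose : 2 * (#A).choose 2 = #A * (#A - 1) := by
    rw [Nat.choose_two_right, Nat.mul_div_cancel' (Nat.even_mul_pred_self _).two_dvd]
  have hsplit : #A * (#A + b - 1) = #A * (#A - 1) + #A * b := by
    rcases Nat.eq_zero_or_pos #A with h | h
    · simp [h]
    · rw [← Nat.mul_add]; congr 1; omega
  rw [Nat.mul_comm b] at hsum
  omega

end CompleteSplit

section Colouring

variable {V : Type*} [DecidableEq V]

def codeColouring (A : Finset V) (code : V → Finset V) : Sym2 V → Fin 2 :=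
  Sym2.lift ⟨fun x y => if x ∉ A ∧ y ∈ code x ∨ y ∉ A ∧ x ∈ code y then 1 else 0,
    fun _ _ => by simp only [or_comm]⟩

variable {A : Finset V} {code : V → Finset V}

lemma codeColouring_of_mem_of_mem {i j : V} (hi : i ∈ A) (hj : j ∈ A) :
    codeColouring A code s(i, j) = 0 := by
  simp [codeColouring, hi, hj]

lemma codeColouring_of_mem_of_notMem {i b : V} (hi : i ∈ A) (hb : b ∉ A) :
    codeColouring A code s(i, b) = if i ∈ code b then 1 else 0 := by
  simp [codeColouring, hi, hb]

lemma codeColouring_of_notMem_of_mem {b i : V} (hb : b ∉ A) (hi : i ∈ A) :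
    codeColouring A code s(b, i) = if i ∈ code b then 1 else 0 := by
  rw [Sym2.eq_swap, codeColouring_of_mem_of_notMem hi hb]

theorem rainbowTwoConnectedColouring_codeColouring (hsub : ∀ b ∉ A, code b ⊆ A)
    (hweight : ∀ b ∉ A, 1 < #(code b))
    (hdist : ∀ b ∉ A, ∀ b' ∉ A, b ≠ b' → 1 < #(code b ∆ code b'))
    (hsep : ∀ i ∈ A, ∀ j ∈ A, i ≠ j → ∃ b ∉ A, (i ∈ code b ↔ j ∉ code b)) :
    RainbowTwoConnectedColouring (completeSplit (A : Set V)) (codeColouring A code) := by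
  intro u v huv
  by_cases hu : u ∈ A <;> by_cases hv : v ∈ A
  · obtain ⟨b, hb, hbuv⟩ := hsep u hu v hv huv
    refine hasTwoRainbowPaths_of_adj_of_adj_adj (completeSplit_adj_of_mem_left hu huv)
      (completeSplit_adj_of_mem_left hu (ne_of_mem_of_not_mem hu hb))
      (completeSplit_adj_of_mem_right hv (ne_of_mem_of_not_mem hv hb).symm) ?_
    rw [codeColouring_of_mem_of_notMem hu hb, codeColouring_of_notMem_of_mem hb hv]
    split_ifs <;> simp_all
  · obtain ⟨w, hw, hwu⟩ := exists_mem_ne (hweight v hv) u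
    have hwA := hsub v hv hw
    refine hasTwoRainbowPaths_of_adj_of_adj_adj (completeSplit_adj_of_mem_left hu huv)
      (completeSplit_adj_of_mem_left hu hwu.symm)
      (completeSplit_adj_of_mem_left hwA (ne_of_mem_of_not_mem hwA hv)) ?_
    simp [codeColouring_of_mem_of_mem hu hwA, codeColouring_of_mem_of_notMem hwA hv, hw]
  · obtain ⟨w, hw, hwv⟩ := exists_mem_ne (hweight u hu) v
    have hwA := hsub u hu hw
    refine hasTwoRainbowPaths_of_adj_of_adj_adj (completeSplit_adj_of_mem_right hv huv)
      (completeSplit_adj_of_mem_right hwA (ne_of_mem_of_not_mem hwA hu).symm)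
      (completeSplit_adj_of_mem_right hv hwv) ?_
    simp [codeColouring_of_notMem_of_mem hu hwA, codeColouring_of_mem_of_mem hwA hv, hw]
  · obtain ⟨i, hi, j, hj, hij⟩ := one_lt_card.1 (hdist u hu v hv huv)
    have mem_A {k} (hk : k ∈ code u ∆ code v) : k ∈ A := by
      rcases mem_symmDiff.1 hk with hk | hk
      exacts [hsub u hu hk.1, hsub v hv hk.1]
    have colour_ne {k} (hk : k ∈ code u ∆ code v) :
        codeColouring A code s(u, k) ≠ codeColouring A code s(k, v) := by
      rw [codeColouring_of_notMem_of_mem hu (mem_A hk),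
        codeColouring_of_mem_of_notMem (mem_A hk) hv]
      rcases mem_symmDiff.1 hk with hk | hk <;> simp [hk]
    exact hasTwoRainbowPaths_of_adj_adj_of_adj_adj huv hij
      (completeSplit_adj_of_mem_right (mem_A hi) (ne_of_mem_of_not_mem (mem_A hi) hu).symm)
      (completeSplit_adj_of_mem_left (mem_A hi) (ne_of_mem_of_not_mem (mem_A hi) hv))
      (completeSplit_adj_of_mem_right (mem_A hj) (ne_of_mem_of_not_mem (mem_A hj) hu).symm)
      (completeSplit_adj_of_mem_left (mem_A hj) (ne_of_mem_of_not_mem (mem_A hj) hv))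
      (colour_ne hi) (colour_ne hj)

end Colouring

section EvenCode

variable {V : Type*} [DecidableEq V]

lemma one_lt_card_symmDiff_of_even {s t : Finset V} (hs : Even #s) (ht : Even #t)
    (hst : s ≠ t) : 1 < #(s ∆ t) := by
  have hcard : #(s ∆ t) = #(s \ t) + #(t \ s) := by
    rw [symmDiff_def, sup_eq_union, card_union_of_disjoint disjoint_sdiff_sdiff]
  have hpos : 0 < #(s ∆ t) := card_pos.2 (nonempty_iff_ne_empty.2 (symmDiff_eq_bot.not.2 hst))
  have hs' := card_sdiff_add_card_inter s t
  have ht' := card_sdiff_add_card_inter t s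
  rw [inter_comm] at ht'
  obtain ⟨k, hk⟩ := hs
  obtain ⟨l, hl⟩ := ht
  omega

def nonemptyEvenSubsets (A : Finset V) : Finset (Finset V) :=
  A.powerset.filter fun s => s.Nonempty ∧ Even #s

lemma two_pow_sub_one_le_card_nonemptyEvenSubsets {A : Finset V} {i₀ : V} (hi₀ : i₀ ∈ A) :
    2 ^ (#A - 1) - 1 ≤ #(nonemptyEvenSubsets A) := by
  let evenClosure (s : Finset V) : Finset V := if Even #s then s else insert i₀ s
  calc 2 ^ (#A - 1) - 1 = #((A.erase i₀).powerset.erase ∅) := by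
        rw [card_erase_of_mem (empty_mem_powerset _), card_powerset, card_erase_of_mem hi₀]
    _ ≤ #(nonemptyEvenSubsets A) := by
      have not_mem {s : Finset V} (hs : s ∈ (A.erase i₀).powerset.erase ∅) : i₀ ∉ s :=
        fun h => by simpa using (mem_powerset.1 (mem_of_mem_erase hs)) h
      refine card_le_card_of_injOn evenClosure (fun s hs => ?_) (fun s hs t ht hst => ?_)
      · have hsA : s ⊆ A := (mem_powerset.1 (mem_of_mem_erase hs)).trans (erase_subset _ _)
        have hsne : s.Nonempty := nonempty_iff_ne_empty.2 (ne_of_mem_erase hs)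
        simp only [evenClosure, nonemptyEvenSubsets, coe_filter, mem_powerset, Set.mem_ofPred_eq]
        split_ifs with he
        · exact ⟨hsA, hsne, he⟩
        · refine ⟨insert_subset hi₀ hsA, insert_nonempty _ _, ?_⟩
          rw [card_insert_of_notMem (not_mem hs)]
          exact (Nat.not_even_iff_odd.1 he).add_one
      · simp only [evenClosure] at hst
        split_ifs at hst with hs' ht'
        · exact hst
        · exact absurd (hst ▸ mem_insert_self i₀ t) (not_mem hs)
        · exact absurd (hst ▸ mem_insert_self i₀ s) (not_mem ht)
        · rw [← erase_insert (not_mem hs), hst, erase_insert (not_mem ht)]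

lemma exists_separating_subset_nonemptyEvenSubsets {A : Finset V} (hA : 2 < #A) :
    ∃ F ⊆ nonemptyEvenSubsets A, #F ≤ #A - 1 ∧
      ∀ i ∈ A, ∀ j ∈ A, i ≠ j → ∃ s ∈ F, (i ∈ s ↔ j ∉ s) := by
  obtain ⟨i₀, hi₀⟩ := card_pos.1 (by omega : 0 < #A)
  refine ⟨(A.erase i₀).image fun k => {i₀, k}, ?_, ?_, ?_⟩
  · simp only [subset_iff, mem_image, mem_erase, forall_exists_index, and_imp]
    rintro _ k hki₀ hk rfl
    simp [nonemptyEvenSubsets, insert_subset_iff, hi₀, hk, card_pair hki₀.symm]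
  · exact card_image_le.trans (card_erase_of_mem hi₀).le
  have separates (i j : V) (hi : i ∈ A) (hj : j ∈ A) (hij : i ≠ j) (hji₀ : j ≠ i₀) :
      ∃ k ∈ A.erase i₀, i ∈ ({i₀, k} : Finset V) ∧ j ∉ ({i₀, k} : Finset V) := by
    by_cases hii₀ : i = i₀
    · obtain ⟨k, hk, hkj⟩ := exists_mem_ne (by rw [card_erase_of_mem hi₀]; omega) j
      exact ⟨k, hk, by simp [hii₀], by simp [hji₀, hkj.symm]⟩
    · exact ⟨i, mem_erase.2 ⟨hii₀, hi⟩, by simp, by simp [hji₀, hij.symm]⟩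
  intro i hi j hj hij
  by_cases hji₀ : j = i₀
  · obtain ⟨k, hk, hjk, hik⟩ := separates j i hj hi hij.symm (hji₀ ▸ hij)
    exact ⟨_, mem_image_of_mem _ hk, by tauto⟩
  · obtain ⟨k, hk, hik, hjk⟩ := separates i j hi hj hij hji₀
    exact ⟨_, mem_image_of_mem _ hk, by tauto⟩

lemma exists_injOn_of_subset_of_card_le {α β : Type*} [Nonempty β] {s : Finset α}
    {F C : Finset β} (hFC : F ⊆ C) (hF : #F ≤ #s) (hC : #s ≤ #C) :
    ∃ f : α → β, Set.MapsTo f s C ∧ Set.InjOn f s ∧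
      ∀ y ∈ F, ∃ x ∈ s, f x = y := by
  obtain ⟨T, hFT, hTC, hT⟩ := exists_subsuperset_card_eq hFC hF hC
  obtain ⟨f, hf⟩ := s.finite_toSet.exists_bijOn_of_encard_eq (t := (T : Set β))
    (by simp [Set.encard_coe_eq_coe_finsetCard, hT])
  exact ⟨f, fun x hx => hTC (hf.mapsTo hx), hf.injOn, fun y hy => hf.surjOn (hFT hy)⟩

lemma exists_separating_code [Fintype V] {A : Finset V} (hA : 2 < #A) (hlow : #A - 1 ≤ #Aᶜ)
    (hhigh : #Aᶜ < 2 ^ (#A - 1)) :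
    ∃ code : V → Finset V, (∀ b ∉ A, code b ⊆ A) ∧ (∀ b ∉ A, 1 < #(code b)) ∧
      (∀ b ∉ A, ∀ b' ∉ A, b ≠ b' → 1 < #(code b ∆ code b')) ∧
      ∀ i ∈ A, ∀ j ∈ A, i ≠ j → ∃ b ∉ A, (i ∈ code b ↔ j ∉ code b) := by
  obtain ⟨i₀, hi₀⟩ := card_pos.1 (by omega : 0 < #A)
  obtain ⟨F, hF, hFcard, hFsep⟩ := exists_separating_subset_nonemptyEvenSubsets hA
  have hC := two_pow_sub_one_le_card_nonemptyEvenSubsets hi₀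
  obtain ⟨code, hmaps, hinj, hsurj⟩ :=
    exists_injOn_of_subset_of_card_le hF (hFcard.trans hlow) (by omega)
  have hcode {b} (hb : b ∉ A) : code b ⊆ A ∧ (code b).Nonempty ∧ Even #(code b) := by
    simpa [nonemptyEvenSubsets] using hmaps (mem_compl.2 hb)
  refine ⟨code, fun b hb => (hcode hb).1, fun b hb => ?_, fun b hb b' hb' hbb' => ?_, ?_⟩
  · obtain ⟨-, hne, k, hk⟩ := hcode hb
    have := hne.card_pos
    omega
  · exact one_lt_card_symmDiff_of_even (hcode hb).2.2 (hcode hb').2.2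
      fun h => hbb' (hinj (mem_compl.2 hb) (mem_compl.2 hb') h)
  · intro i hi j hj hij
    obtain ⟨s, hs, hsep⟩ := hFsep i hi j hj hij
    obtain ⟨b, hb, rfl⟩ := hsurj s hs
    exact ⟨b, mem_compl.1 hb, hsep⟩

end EvenCode

lemma le_two_pow_sub_two {a : ℕ} (ha : 4 ≤ a) : a ≤ 2 ^ (a - 2) := by
  obtain ⟨k, rfl⟩ : ∃ k, a = k + 4 := ⟨a - 4, by omega⟩
  have := Nat.lt_two_pow_self (n := k)
  rw [show k + 4 - 2 = k + 2 by omega, pow_add]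
  omega

/-- For every a ≥ 4 and 2^(a-2)+a-1 ≤ n ≤ 2^(a-1)+a-1 there is a
2-connected graph on n vertices (complete bipartite with classes A, B, |A| = a,
plus all edges inside A) with C(a,2) + a(n-a) edges and rc₂ = 2. -/
theorem stmt2 (a n : ℕ) (ha : 4 ≤ a)
    (h1 : 2 ^ (a - 2) + a - 1 ≤ n) (h2 : n ≤ 2 ^ (a - 1) + a - 1) :
    ∃ (G : SimpleGraph (Fin n)) (A : Finset (Fin n)), A.card = a ∧
      (∀ u v : Fin n, G.Adj u v ↔ u ≠ v ∧ (u ∈ A ∨ v ∈ A)) ∧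
      TwoConnected G ∧ G.edgeSet.ncard = Nat.choose a 2 + a * (n - a) ∧ rc2 G = 2 := by
  have := le_two_pow_sub_two ha
  have := Nat.two_pow_pos (a - 1)
  obtain ⟨A, -, rfl⟩ := exists_subset_card_eq (s := (univ : Finset (Fin n)))
    (by rw [card_univ, Fintype.card_fin]; omega : a ≤ #univ)
  have hAc : #Aᶜ = n - #A := by rw [card_compl, Fintype.card_fin]
  obtain ⟨code, hsub, hweight, hdist, hsep⟩ :=
    exists_separating_code (A := A) (by omega) (by omega) (by omega)
  have : Nontrivial (Fin n) := Fin.nontrivial_iff_two_le.2 (by omega)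
  refine ⟨completeSplit A, A, rfl, fun u v => by simp,
    twoConnected_completeSplit (by rw [Fintype.card_fin]; omega) (by omega),
    by rw [ncard_edgeSet_completeSplit, hAc],
    rc2_eq_two (rainbowTwoConnectedColouring_codeColouring hsub hweight hdist hsep)⟩
end

section
/- Let 5 ≤ r ≤ n − 1 and n > r(r−1)/6. If G is a 2-connected graph on n vertices with rc₂(G) ≤ r, then |E(G)| ≥ (6/5)·n − r(r−1)/5. Consequently t₂(n,r) ≥ (6/5)·n − r(r−1)/5. -/
open SimpleGraph

/-!
Whitney's theorem makes rc₂ of a 2-connected graph finite, so `rc2 G ≤ r` provides a rainbow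
2-connected colouring `c` with `r` colours. Every vertex has degree at least two. If `x` and `y`
are adjacent vertices of degree two and `z` is the other neighbour of `y`, every rainbow path from
`x` to a vertex beyond `y` must run `x, y, z`; hence `(c xy, c yz)` is a pair of distinct colours,
and the same pair cannot come from two different edges. So there are at most `2 r (r - 1)` darts
between vertices of degree two. Double counting the darts leaving the set `A` of degree-two
vertices gives `2 |A| ≤ 2 r (r - 1) + ∑_{v ∉ A} deg v`, and with `2 |E| = 2 |A| + ∑_{v ∉ A} deg v`
and `deg v ≥ 3` off `A` this is `6 n ≤ 5 |E| + r (r - 1)`. For `t₂`, the complete graph `K_n`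
with a four-colouring by parities shows that the minimum is taken over a nonempty set.
-/

open Finset

variable {V : Type*} {G : SimpleGraph V}

def HasTwoInternallyDisjointPaths (G : SimpleGraph V) (u v : V) : Prop :=
  ∃ p q : G.Walk u v, p.IsPath ∧ q.IsPath ∧ p ≠ q ∧
    ∀ w ∈ p.support, w ∈ q.support → w = u ∨ w = v

lemma HasTwoInternallyDisjointPaths.symm {u v : V} (h : HasTwoInternallyDisjointPaths G u v) :
    HasTwoInternallyDisjointPaths G v u := by
  obtain ⟨p, q, hp, hq, hpq, hdisj⟩ := h
  refine ⟨p.reverse, q.reverse, hp.reverse, hq.reverse, Walk.reverse_injective.ne hpq,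
    fun w hwp hwq => ?_⟩
  rw [Walk.support_reverse, List.mem_reverse] at hwp hwq
  exact (hdisj w hwp hwq).symm

lemma HasTwoInternallyDisjointPaths.ne {u v : V} (h : HasTwoInternallyDisjointPaths G u v) :
    u ≠ v := by
  rintro rfl
  obtain ⟨p, q, hp, hq, hpq, -⟩ := h
  exact hpq ((Walk.isPath_iff_nil.mp hp).eq_nil.trans (Walk.isPath_iff_nil.mp hq).eq_nil.symm)

lemma SimpleGraph.Walk.exists_suffix_notMem {u v : V} (p : G.Walk u v) (S : Set V)
    (hS : ∃ m ∈ p.support, m ∈ S) :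
    ∃ z ∈ S, ∃ q : G.Walk z v, q.IsSubwalk p ∧ ∀ m ∈ q.support.tail, m ∉ S := by
  induction p with
  | nil =>
    simp only [Walk.support_nil, List.mem_singleton, exists_eq_left] at hS
    exact ⟨_, hS, Walk.nil, Walk.isSubwalk_rfl _, by simp⟩
  | @cons a x b h p ih =>
    by_cases hp : ∃ m ∈ p.support, m ∈ S
    · obtain ⟨z, hz, q, hq, hqS⟩ := ih hp
      exact ⟨z, hz, q, hq.trans (p.isSubwalk_cons h), hqS⟩
    · have ha : a ∈ S := by
        obtain ⟨m, hm, hmS⟩ := hS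
        rw [Walk.support_cons, List.mem_cons] at hm
        rcases hm with rfl | hm
        exacts [hmS, absurd ⟨m, hm, hmS⟩ hp]
      exact ⟨a, ha, Walk.cons h p, Walk.isSubwalk_rfl _, fun m hm hmS => hp ⟨m, hm, hmS⟩⟩

lemma SimpleGraph.Walk.IsPath.append {u v w : V} {p : G.Walk u v} {q : G.Walk v w}
    (hp : p.IsPath) (hq : q.IsPath) (hpq : ∀ m ∈ q.support.tail, m ∉ p.support) :
    (p.append q).IsPath := by
  rw [Walk.isPath_def, Walk.support_append, List.nodup_append]
  exact ⟨hp.support_nodup, hq.support_nodup.sublist (List.tail_sublist _),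
    fun a ha b hb hab => hpq b hb (hab ▸ ha)⟩

/-- The inductive step of Whitney's theorem: the new paths are `P` up to `z` followed by `R`, and
`Q` followed by the edge `wv`. -/
lemma HasTwoInternallyDisjointPaths.of_path_to_neighbor [DecidableEq V] {u w v z : V}
    {P Q : G.Walk u w} (hP : P.IsPath) (hQ : Q.IsPath)
    (hPQ : ∀ m ∈ P.support, m ∈ Q.support → m = u ∨ m = w)
    (hwv : G.Adj w v) (hvQ : v ∉ Q.support) (hzP : z ∈ P.support)
    {R : G.Walk z v} (hR : R.IsPath) (hwR : w ∉ R.support)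
    (hRPQ : ∀ m ∈ R.support.tail, m ∉ P.support ∧ m ∉ Q.support) :
    HasTwoInternallyDisjointPaths G u v := by
  set T := P.takeUntil z hzP
  have hTP : T.support ⊆ P.support := P.support_takeUntil_subset_support hzP
  have hwT : w ∉ T.support :=
    Walk.endpoint_notMem_support_takeUntil hP hzP fun h => hwR (h ▸ R.start_mem_support)
  have hw_notMem : w ∉ (T.append R).support := by
    rw [Walk.mem_support_append_iff]
    exact fun h => h.elim hwT hwR
  refine ⟨T.append R, Q.concat hwv, (hP.takeUntil hzP).append hR fun m hm hmT => (hRPQ m hm).1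
    (hTP hmT), hQ.concat hvQ hwv, fun h => hw_notMem (h ▸ by simp), fun m hm hmQ => ?_⟩
  rw [Walk.support_concat, List.mem_append, List.mem_singleton] at hmQ
  rcases hmQ with hmQ | rfl
  · rw [Walk.support_append, List.mem_append] at hm
    rcases hm with hmT | hmR
    · exact .inl ((hPQ m (hTP hmT) hmQ).resolve_right fun h => hwT (h ▸ hmT))
    · exact absurd hmQ (hRPQ m hmR).2
  · exact .inr rfl

section TwoConnected

variable [Fintype V]

lemma TwoConnected.exists_ne_ne (hG : TwoConnected G) (a b : V) : ∃ c, c ≠ a ∧ c ≠ b := by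
  classical
  obtain ⟨c, -, hc⟩ := exists_mem_notMem_of_card_lt_card (s := {a, b}) (t := univ)
    (card_le_two.trans_lt (hG.1.trans_lt' (by omega)))
  exact ⟨c, by simpa [not_or] using hc⟩

lemma TwoConnected.exists_isPath_notMem_support (hG : TwoConnected G) {u v w : V}
    (hu : u ≠ w) (hv : v ≠ w) : ∃ p : G.Walk u v, p.IsPath ∧ w ∉ p.support := by
  classical
  obtain ⟨W⟩ := (hG.2 w).preconnected ⟨u, hu⟩ ⟨v, hv⟩
  let p := W.map (Embedding.induce ({w}ᶜ : Set V)).toHom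
  refine ⟨p.bypass, p.bypass_isPath, fun h => ?_⟩
  obtain ⟨m, -, hm⟩ := List.mem_map.mp (Walk.support_map _ _ ▸ p.support_bypass_subset_support h)
  exact m.2 hm

lemma TwoConnected.connected (hG : TwoConnected G) : G.Connected := by
  have : Nonempty V := Fintype.card_pos_iff.mp (by have := hG.1; omega)
  refine ⟨fun u v => ?_⟩
  obtain ⟨w, hwu, hwv⟩ := hG.exists_ne_ne u v
  obtain ⟨p, -⟩ := hG.exists_isPath_notMem_support hwu.symm hwv.symm
  exact p.reachable

lemma TwoConnected.exists_adj_ne (hG : TwoConnected G) {v w : V} (hvw : v ≠ w) :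
    ∃ a, G.Adj v a ∧ a ≠ w := by
  obtain ⟨t, htv, htw⟩ := hG.exists_ne_ne v w
  obtain ⟨p, -, hwp⟩ := hG.exists_isPath_notMem_support hvw htw
  obtain ⟨a, hva, q, rfl⟩ := Walk.exists_eq_cons_of_ne htv.symm p
  exact ⟨a, hva, by rintro rfl; simp at hwp⟩

lemma TwoConnected.two_le_degree [DecidableRel G.Adj] (hG : TwoConnected G) (v : V) :
    2 ≤ G.degree v := by
  obtain ⟨w, hw, -⟩ := hG.exists_ne_ne v v
  obtain ⟨a, hva, -⟩ := hG.exists_adj_ne hw.symm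
  obtain ⟨b, hvb, hba⟩ := hG.exists_adj_ne (G.ne_of_adj hva)
  rw [← card_neighborFinset_eq_degree]
  exact one_lt_card.mpr ⟨a, by simpa using hva, b, by simpa using hvb, hba.symm⟩

lemma TwoConnected.hasTwoInternallyDisjointPaths_of_adj (hG : TwoConnected G) {u v : V}
    (huv : G.Adj u v) : HasTwoInternallyDisjointPaths G u v := by
  obtain ⟨a, hua, hav⟩ := hG.exists_adj_ne (G.ne_of_adj huv)
  obtain ⟨p, hp, hup⟩ := hG.exists_isPath_notMem_support (G.ne_of_adj hua).symm
    (G.ne_of_adj huv).symm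
  refine ⟨huv.toWalk, .cons hua p, .of_adj huv, hp.cons hup, fun h => ?_, fun m hm _ => ?_⟩
  · have := congrArg (·.getVert 1) h
    simp only [Walk.getVert_cons_succ, Walk.getVert_zero] at this
    exact hav this.symm
  · simpa using hm

lemma TwoConnected.hasTwoInternallyDisjointPaths_of_adj_right (hG : TwoConnected G) {a w v : V}
    (h : HasTwoInternallyDisjointPaths G a w) (hwv : G.Adj w v) (hva : v ≠ a) :
    HasTwoInternallyDisjointPaths G a v := by
  classical
  obtain ⟨R₀, hR₀, hwR₀⟩ := hG.exists_isPath_notMem_support h.ne (G.ne_of_adj hwv).symm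
  obtain ⟨P, Q, hP, hQ, -, hPQ⟩ := h
  obtain ⟨z, hz, R, hR, hRPQ⟩ :=
    R₀.exists_suffix_notMem {m | m ∈ P.support ∨ m ∈ Q.support}
      ⟨a, R₀.start_mem_support, .inl P.start_mem_support⟩
  have hwR : w ∉ R.support := fun h => hwR₀ (hR.support_subset h)
  simp only [Set.mem_ofPred_eq, not_or] at hz hRPQ
  wlog hzP : z ∈ P.support generalizing P Q
  · exact this Q P hQ hP (fun m hmQ hmP => hPQ m hmP hmQ) hz.symm
      (fun m hm => (hRPQ m hm).symm) (hz.resolve_left hzP)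
  have hvQ : v ∉ Q.support := by
    by_cases hzv : z = v
    · subst hzv
      exact fun hvQ => (hPQ _ hzP hvQ).elim hva (G.ne_of_adj hwv).symm
    · exact (hRPQ v (R.end_mem_tail_support_of_ne hzv)).2
  exact .of_path_to_neighbor hP hQ hPQ hwv hvQ hzP (Walk.isPath_of_isSubwalk hR hR₀) hwR hRPQ

theorem TwoConnected.hasTwoInternallyDisjointPaths (hG : TwoConnected G) {u v : V}
    (huv : u ≠ v) : HasTwoInternallyDisjointPaths G u v := by
  obtain ⟨W⟩ := hG.connected.preconnected u v
  induction W with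
  | nil => exact absurd rfl huv
  | @cons u x v hux p ih =>
    by_cases hxv : x = v
    · subst hxv
      exact hG.hasTwoInternallyDisjointPaths_of_adj hux
    · exact (hG.hasTwoInternallyDisjointPaths_of_adj_right (ih hxv |>.symm) hux.symm huv).symm

end TwoConnected

lemma SimpleGraph.adj_iff_of_neighborSet_eq {x y w m : V} (hx : G.neighborSet x = {y, w}) :
    G.Adj x m ↔ m = y ∨ m = w := by
  rw [← mem_neighborSet, hx, Set.mem_insert_iff, Set.mem_singleton_iff]

lemma IsRainbowWalk.eq_of_colour_eq {α : Type*} {col : Sym2 V → α} {u v : V} {p : G.Walk u v}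
    (hp : IsRainbowWalk col p) {e f : Sym2 V} (he : e ∈ p.edges) (hf : f ∈ p.edges)
    (hef : col e = col f) : e = f :=
  List.inj_on_of_nodup_map hp he hf hef

lemma SimpleGraph.Walk.IsPath.eq_cons_of_neighborSet_eq {x y z v : V} {hxy : G.Adj x y}
    {p : G.Walk y v} (hp : (Walk.cons hxy p).IsPath) (hyv : y ≠ v)
    (hy : G.neighborSet y = {x, z}) :
    ∃ (hyz : G.Adj y z) (q : G.Walk z v), p = Walk.cons hyz q := by
  obtain ⟨m, hym, q, rfl⟩ := Walk.exists_eq_cons_of_ne hyv p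
  rcases (adj_iff_of_neighborSet_eq hy).mp hym with rfl | rfl
  · simp at hp
  · exact ⟨hym, q, rfl⟩

namespace RainbowTwoConnectedColouring

variable {α : Type*} {col : Sym2 V → α} (hcol : RainbowTwoConnectedColouring G col)
include hcol

/-- Of the two internally disjoint rainbow paths from `x` to `v`, at most one passes through `w`. -/
lemma exists_rainbow_path_cons {x y w v : V} (hx : G.neighborSet x = {y, w}) (hxv : x ≠ v) :
    ∃ (hxy : G.Adj x y) (p : G.Walk y v),
      (Walk.cons hxy p).IsPath ∧ IsRainbowWalk col (Walk.cons hxy p) := by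
  obtain ⟨p, q, hp, hq, hpq, hrp, hrq, hdisj⟩ := hcol x v hxv
  obtain ⟨m, hxm, p, rfl⟩ := Walk.exists_eq_cons_of_ne hxv p
  obtain ⟨m', hxm', q, rfl⟩ := Walk.exists_eq_cons_of_ne hxv q
  rcases (adj_iff_of_neighborSet_eq hx).mp hxm with rfl | hmw
  · exact ⟨hxm, p, hp, hrp⟩
  rcases (adj_iff_of_neighborSet_eq hx).mp hxm' with rfl | hm'w
  · exact ⟨hxm', q, hq, hrq⟩
  obtain rfl := hmw
  obtain rfl := hm'w.symm
  exfalso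
  by_cases hmv : m = v
  · subst hmv
    obtain rfl := (Walk.isPath_iff_nil.mp hp.of_cons).eq_nil
    obtain rfl := (Walk.isPath_iff_nil.mp hq.of_cons).eq_nil
    exact hpq rfl
  · exact (hdisj m (by simp) (by simp)).elim (G.ne_of_adj hxm).symm hmv

lemma exists_rainbow_path_cons_cons {x y z w v : V} (hx : G.neighborSet x = {y, w})
    (hy : G.neighborSet y = {x, z}) (hxv : x ≠ v) (hyv : y ≠ v) :
    ∃ (hxy : G.Adj x y) (hyz : G.Adj y z) (p : G.Walk z v),
      (Walk.cons hxy (Walk.cons hyz p)).IsPath ∧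
        IsRainbowWalk col (Walk.cons hxy (Walk.cons hyz p)) := by
  obtain ⟨hxy, p, hp, hrp⟩ := exists_rainbow_path_cons hcol hx hxv
  obtain ⟨hyz, q, rfl⟩ := hp.eq_cons_of_neighborSet_eq hyv hy
  exact ⟨hxy, hyz, q, hp, hrp⟩

lemma colour_ne_of_neighborSet_eq {x y z w : V} (hx : G.neighborSet x = {y, w})
    (hy : G.neighborSet y = {x, z}) (hxz : x ≠ z) : col s(x, y) ≠ col s(y, z) := by
  have hyz : G.Adj y z := (adj_iff_of_neighborSet_eq hy).mpr (.inr rfl)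
  obtain ⟨hxy, hyz, p, -, hrp⟩ := exists_rainbow_path_cons_cons hcol hx hy hxz (G.ne_of_adj hyz)
  intro h
  have := hrp.eq_of_colour_eq (by simp) (by simp) h
  simp [G.ne_of_adj hxy, hxz] at this

/-- A rainbow path from `x` to `y'` runs `x, y, z, …` and ends with `x'y'` or `z'y'`; when
`z = y'` (and so `z' = y`), a rainbow path from `x` to `x'` runs `x, y, y', x'` instead. -/
lemma colour_ne_of_colour_eq {x y z w x' y' z' w' : V}
    (hx : G.neighborSet x = {y, w}) (hy : G.neighborSet y = {x, z})
    (hx' : G.neighborSet x' = {y', w'}) (hy' : G.neighborSet y' = {x', z'})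
    (hxx' : x ≠ x') (hxy' : x ≠ y') (hyx' : y ≠ x') (hyy' : y ≠ y')
    (hc : col s(x, y) = col s(x', y')) : col s(y, z) ≠ col s(y', z') := by
  intro hc'
  by_cases hzy' : z = y'
  · subst hzy'
    obtain rfl : y = z' :=
      ((adj_iff_of_neighborSet_eq hy').mp ((adj_iff_of_neighborSet_eq hy).mpr (.inr rfl)).symm)
        |>.resolve_left hyx'
    obtain ⟨hxy, hyz, p, hp, hrp⟩ := exists_rainbow_path_cons_cons hcol hx hy hxx' hyx'
    have hzx' : G.Adj z x' := (adj_iff_of_neighborSet_eq hy').mpr (.inl rfl)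
    obtain ⟨hzx', q, rfl⟩ :=
      hp.of_cons.eq_cons_of_neighborSet_eq (G.ne_of_adj hzx') (hy'.trans (Set.pair_comm _ _))
    have := hrp.eq_of_colour_eq (f := s(z, x')) (by simp) (by simp)
      (hc.trans (by rw [Sym2.eq_swap]))
    simp [hxx', hxy'] at this
  · obtain ⟨hxy, hyz, p, -, hrp⟩ := exists_rainbow_path_cons_cons hcol hx hy hxy' hyy'
    have hnil := Walk.not_nil_of_ne (p := Walk.cons hxy (Walk.cons hyz p)) hxy'
    have hlast := Walk.mk_penultimate_end_mem_edges hnil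
    rcases (adj_iff_of_neighborSet_eq hy').mp (Walk.adj_penultimate hnil).symm with h | h <;>
      rw [h] at hlast
    · have := hrp.eq_of_colour_eq (by simp) hlast (hc.trans (by rw [Sym2.eq_swap]))
      simp [hxx', hxy'] at this
    · have := hrp.eq_of_colour_eq (by simp) hlast (hc'.trans (by rw [Sym2.eq_swap]))
      simp [hyy', hzy'] at this

end RainbowTwoConnectedColouring

section Finite

variable [Fintype V] [DecidableRel G.Adj]

lemma SimpleGraph.neighborSet_eq_pair_of_degree_eq_two {v a b : V} (h : G.degree v = 2)
    (ha : G.Adj v a) (hb : G.Adj v b) (hab : a ≠ b) : G.neighborSet v = {a, b} := by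
  classical
  have : G.neighborFinset v = {a, b} := (Finset.eq_of_subset_of_card_le
    (by simp [Finset.insert_subset_iff, ha, hb])
    (by rw [Finset.card_pair hab, card_neighborFinset_eq_degree, h])).symm
  rw [← coe_neighborFinset, this, Finset.coe_pair]

lemma SimpleGraph.exists_neighborSet_eq_pair_of_degree_eq_two {v a : V} (h : G.degree v = 2)
    (ha : G.Adj v a) : ∃ b, a ≠ b ∧ G.neighborSet v = {a, b} := by
  obtain ⟨b, hb, hba⟩ := Finset.exists_mem_ne
    (by rw [card_neighborFinset_eq_degree, h]; omega : 1 < #(G.neighborFinset v)) a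
  rw [mem_neighborFinset] at hb
  exact ⟨b, hba.symm, neighborSet_eq_pair_of_degree_eq_two h ha hb hba.symm⟩

namespace RainbowTwoConnectedColouring

variable {α : Type*} {col : Sym2 V → α} (hcol : RainbowTwoConnectedColouring G col)
include hcol

lemma colour_ne_of_degree_eq_two {s t t' : V} (hs : G.degree s = 2) (ht : G.degree t = 2)
    (hst : G.Adj s t) (hst' : G.Adj s t') (htt' : t ≠ t') : col s(s, t) ≠ col s(s, t') := by
  obtain ⟨w, -, hw⟩ := exists_neighborSet_eq_pair_of_degree_eq_two ht hst.symm
  rw [Sym2.eq_swap]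
  exact colour_ne_of_neighborSet_eq hcol hw (neighborSet_eq_pair_of_degree_eq_two hs hst hst' htt')
    htt'

lemma edge_eq_of_colour_eq {x y z x' y' z' : V} (hx : G.degree x = 2) (hy : G.degree y = 2)
    (hx' : G.degree x' = 2) (hy' : G.degree y' = 2) (hxy : G.Adj x y) (hxy' : G.Adj x' y')
    (hz : G.neighborSet y = {x, z}) (hz' : G.neighborSet y' = {x', z'})
    (hc : col s(x, y) = col s(x', y')) (hc' : col s(y, z) = col s(y', z')) :
    s(x, y) = s(x', y') := by
  by_contra hne
  have swap (a b : V) : col s(a, b) = col s(b, a) := congrArg col Sym2.eq_swap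
  by_cases h₁ : x = x'
  · subst h₁
    exact colour_ne_of_degree_eq_two hcol hx hy hxy hxy' (by rintro rfl; exact hne rfl) hc
  by_cases h₂ : x = y'
  · subst h₂
    exact colour_ne_of_degree_eq_two hcol hx hy hxy hxy'.symm
      (by rintro rfl; exact hne Sym2.eq_swap) (hc.trans (swap _ _))
  by_cases h₃ : y = x'
  · subst h₃
    exact colour_ne_of_degree_eq_two hcol hy hx hxy.symm hxy'
      (by rintro rfl; exact hne Sym2.eq_swap) ((swap _ _).trans hc)
  by_cases h₄ : y = y'
  · subst h₄
    exact colour_ne_of_degree_eq_two hcol hy hx hxy.symm hxy'.symm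
      (by rintro rfl; exact hne rfl) ((swap _ _).trans (hc.trans (swap _ _)))
  obtain ⟨w, -, hw⟩ := exists_neighborSet_eq_pair_of_degree_eq_two hx hxy
  obtain ⟨w', -, hw'⟩ := exists_neighborSet_eq_pair_of_degree_eq_two hx' hxy'
  exact colour_ne_of_colour_eq hcol hw hz hw' hz' h₁ h₂ h₃ h₄ hc hc'

end RainbowTwoConnectedColouring

def degTwoDarts (G : SimpleGraph V) [DecidableRel G.Adj] : Finset G.Dart :=
  {d | G.degree d.fst = 2 ∧ G.degree d.snd = 2}

/-- `(x, y) ↦ (c xy, c yz)`, with `z` the other neighbour of `y`, is at most two-to-one into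
pairs of distinct colours. -/
lemma RainbowTwoConnectedColouring.card_degTwoDarts_le {r : ℕ} {col : Sym2 V → Fin r}
    (hcol : RainbowTwoConnectedColouring G col) : #(degTwoDarts G) ≤ 2 * (r * (r - 1)) := by
  classical
  have hnext (d : G.Dart) :
      ∃ z, d ∈ degTwoDarts G → d.fst ≠ z ∧ G.neighborSet d.snd = {d.fst, z} := by
    by_cases hd : G.degree d.snd = 2
    · obtain ⟨z, hz⟩ := exists_neighborSet_eq_pair_of_degree_eq_two hd d.adj.symm
      exact ⟨z, fun _ => hz⟩
    · exact ⟨d.fst, fun h => absurd (mem_filter.mp h).2.2 hd⟩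
  choose next hnext using hnext
  let ψ (d : G.Dart) : Fin r × Fin r := (col d.edge, col s(d.snd, next d))
  have hψ : ∀ d ∈ degTwoDarts G, ψ d ∈ (univ : Finset (Fin r)).offDiag := by
    intro d hd
    obtain ⟨hx, -⟩ := (mem_filter.mp hd).2
    obtain ⟨w, -, hw⟩ := exists_neighborSet_eq_pair_of_degree_eq_two hx d.adj
    simp only [mem_offDiag, mem_univ, true_and, ψ]
    exact colour_ne_of_neighborSet_eq hcol hw (hnext d hd).2 (hnext d hd).1
  have hψ_edge : ∀ d ∈ degTwoDarts G, ∀ d' ∈ degTwoDarts G, ψ d = ψ d' → d.edge = d'.edge := by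
    intro d hd d' hd' h
    obtain ⟨hx, hy⟩ := (mem_filter.mp hd).2
    obtain ⟨hx', hy'⟩ := (mem_filter.mp hd').2
    exact edge_eq_of_colour_eq hcol hx hy hx' hy' d.adj d'.adj (hnext d hd).2 (hnext d' hd').2
      (Prod.ext_iff.mp h).1 (Prod.ext_iff.mp h).2
  have hfibre : ∀ c ∈ (univ : Finset (Fin r)).offDiag, #{d ∈ degTwoDarts G | ψ d = c} ≤ 2 := by
    intro c _
    by_cases hc : ∃ d₀ ∈ degTwoDarts G, ψ d₀ = c
    · obtain ⟨d₀, hd₀, rfl⟩ := hc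
      refine (card_le_card fun d hd => ?_).trans (card_insert_le d₀ {d₀.symm})
      rw [mem_filter] at hd
      simpa using (dart_edge_eq_iff d d₀).mp (hψ_edge d hd.1 d₀ hd₀ hd.2)
    · rw [filter_eq_empty_iff.mpr fun d hd h => hc ⟨d, hd, h⟩, card_empty]
      omega
  calc #(degTwoDarts G) ≤ 2 * #(univ : Finset (Fin r)).offDiag :=
        card_le_mul_card_image_of_maps_to hψ 2 hfibre
    _ = 2 * (r * (r - 1)) := by simp [offDiag_card, Nat.mul_sub_one]

lemma SimpleGraph.card_filter_dart_snd (p : V → Prop) [DecidablePred p] :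
    #{d : G.Dart | p d.snd} = #{d : G.Dart | p d.fst} :=
  card_nbij' Dart.symm Dart.symm (fun d hd => by simpa using hd) (fun d hd => by simpa using hd)
    (fun d _ => d.symm_symm) (fun d _ => d.symm_symm)

variable [DecidableEq V]

lemma SimpleGraph.card_filter_dart_fst (p : V → Prop) [DecidablePred p] :
    #{d : G.Dart | p d.fst} = ∑ v with p v, G.degree v := by
  rw [card_eq_sum_card_fiberwise (f := fun d : G.Dart => d.fst) (t := {v | p v})
    fun d hd => by simpa using hd]
  refine sum_congr rfl fun v hv => ?_
  rw [← dart_fst_fiber_card_eq_degree, filter_filter]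
  congr 1
  ext d
  simp only [mem_filter, mem_univ, true_and, and_iff_right_iff_imp]
  rintro rfl
  exact (mem_filter.mp hv).2

lemma sum_degree_eq_two_le :
    ∑ v with G.degree v = 2, G.degree v ≤
      #(degTwoDarts G) + ∑ v with G.degree v ≠ 2, G.degree v := by
  rw [← card_filter_dart_fst, ← card_filter_dart_fst,
    ← card_filter_dart_snd (fun v => G.degree v ≠ 2)]
  refine (card_le_card fun d hd => ?_).trans (card_union_le _ _)
  by_cases h : G.degree d.snd = 2 <;> simp_all [degTwoDarts]

theorem TwoConnected.six_mul_card_le (hG : TwoConnected G) {r : ℕ} {col : Sym2 V → Fin r}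
    (hcol : RainbowTwoConnectedColouring G col) :
    6 * Fintype.card V ≤ 5 * #G.edgeFinset + r * (r - 1) := by
  have hdarts := sum_degree_eq_two_le (G := G)
  have hD := hcol.card_degTwoDarts_le
  have hsum := sum_filter_add_sum_filter_not univ (fun v => G.degree v = 2) (fun v => G.degree v)
  rw [sum_degrees_eq_twice_card_edges] at hsum
  have hA : ∑ v with G.degree v = 2, G.degree v = 2 * #{v | G.degree v = 2} := by
    rw [sum_congr rfl fun v hv => (mem_filter.mp hv).2, sum_const, smul_eq_mul, mul_comm]
  have hB : 3 * #{v | G.degree v ≠ 2} ≤ ∑ v with G.degree v ≠ 2, G.degree v := by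
    rw [mul_comm, ← smul_eq_mul]
    exact card_nsmul_le_sum _ _ _ fun v hv =>
      lt_of_le_of_ne (hG.two_le_degree v) (Ne.symm (mem_filter.mp hv).2)
  have hcard := card_filter_add_card_filter_not (s := univ) (fun v => G.degree v = 2)
  rw [card_univ] at hcard
  simp only [← ne_eq] at hsum hcard
  omega

end Finite

lemma IsRainbowWalk.comp {α β : Type*} {col : Sym2 V → α} {f : α → β}
    (hf : Function.Injective f) {u v : V} {p : G.Walk u v} (hp : IsRainbowWalk col p) :
    IsRainbowWalk (f ∘ col) p := by
  rw [IsRainbowWalk, ← List.map_map]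
  exact hp.map hf

lemma RainbowTwoConnectedColouring.comp {α β : Type*} {col : Sym2 V → α} {f : α → β}
    (hf : Function.Injective f) (hcol : RainbowTwoConnectedColouring G col) :
    RainbowTwoConnectedColouring G (f ∘ col) := fun u v huv => by
  obtain ⟨p, q, hp, hq, hpq, hrp, hrq, hdisj⟩ := hcol u v huv
  exact ⟨p, q, hp, hq, hpq, hrp.comp hf, hrq.comp hf, hdisj⟩

lemma SimpleGraph.Walk.IsPath.isRainbowWalk {α : Type*} {col : Sym2 V → α}
    (hcol : Function.Injective col) {u v : V} {p : G.Walk u v} (hp : p.IsPath) :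
    IsRainbowWalk col p :=
  hp.isTrail.edges_nodup.map hcol

lemma TwoConnected.rainbowTwoConnectedColouring [Fintype V] (hG : TwoConnected G) {α : Type*}
    {col : Sym2 V → α} (hcol : Function.Injective col) : RainbowTwoConnectedColouring G col :=
  fun _ _ huv => by
    obtain ⟨p, q, hp, hq, hpq, hdisj⟩ := hG.hasTwoInternallyDisjointPaths huv
    exact ⟨p, q, hp, hq, hpq, hp.isRainbowWalk hcol, hq.isRainbowWalk hcol, hdisj⟩

lemma TwoConnected.exists_rainbowTwoConnectedColouring_of_rc2_le [Fintype V]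
    (hG : TwoConnected G) {r : ℕ} (hr : rc2 G ≤ r) :
    ∃ col : Sym2 V → Fin r, RainbowTwoConnectedColouring G col := by
  obtain ⟨col, hcol⟩ :=
    Nat.sInf_mem (s := {r | ∃ col : Sym2 V → Fin r, RainbowTwoConnectedColouring G col})
      ⟨_, _, hG.rainbowTwoConnectedColouring (Fintype.equivFin (Sym2 V)).injective⟩
  exact ⟨_, hcol.comp (Fin.castLE_injective hr)⟩

lemma twoConnected_top [Fintype V] (hV : 3 ≤ Fintype.card V) :
    TwoConnected (⊤ : SimpleGraph V) := by
  refine ⟨hV, fun v => ?_⟩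
  obtain ⟨w, hwv⟩ := Fintype.exists_ne_of_one_lt_card (by omega) v
  have : Nonempty ({v}ᶜ : Set V) := ⟨⟨w, hwv⟩⟩
  rw [induce_top]
  exact connected_top

/-- A four-colouring of `K_n`: the edge `ab` with `a < b` gets the parities of `a` and of `b`. -/
def parityColouring (n : ℕ) : Sym2 (Fin n) → Fin 4 :=
  Sym2.lift ⟨fun a b => ⟨2 * (min a.val b.val % 2) + max a.val b.val % 2, by omega⟩,
    fun a b => Fin.ext (by dsimp only; rw [min_comm, max_comm])⟩

/-- For `a < b`, the middle vertex `a + 1`, `b + 1` or `a - 1` (the first one that is available)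
changes one of the two parities. -/
lemma exists_parity_ne {n a b : ℕ} (hab : a < b) (hb : b < n) (hn : 3 ≤ n) :
    ∃ c < n, c ≠ a ∧ c ≠ b ∧
      2 * (min a c % 2) + max a c % 2 ≠ 2 * (min c b % 2) + max c b % 2 := by
  by_cases h₁ : a + 1 = b
  · by_cases h₂ : b + 1 < n
    · exact ⟨b + 1, by omega⟩
    · exact ⟨a - 1, by omega⟩
  · exact ⟨a + 1, by omega⟩

lemma exists_parityColouring_ne {n : ℕ} (hn : 3 ≤ n) {u v : Fin n} (huv : u ≠ v) :
    ∃ w, w ≠ u ∧ w ≠ v ∧ parityColouring n s(u, w) ≠ parityColouring n s(w, v) := by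
  wlog h : u < v generalizing u v
  · obtain ⟨w, hwv, hwu, hc⟩ := this huv.symm (lt_of_le_of_ne (not_lt.mp h) huv.symm)
    refine ⟨w, hwu, hwv, ?_⟩
    rw [Sym2.eq_swap (a := u), Sym2.eq_swap (a := w) (b := v)]
    exact hc.symm
  obtain ⟨c, hc, hcu, hcv, hne⟩ := exists_parity_ne h v.isLt hn
  refine ⟨⟨c, hc⟩, fun h => hcu (congrArg Fin.val h), fun h => hcv (congrArg Fin.val h), ?_⟩
  simpa [parityColouring, Fin.ext_iff] using hne

lemma rainbowTwoConnectedColouring_parityColouring {n : ℕ} (hn : 3 ≤ n) :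
    RainbowTwoConnectedColouring ⊤ (parityColouring n) := by
  intro u v huv
  obtain ⟨w, hwu, hwv, hc⟩ := exists_parityColouring_ne hn huv
  have huw : (⊤ : SimpleGraph (Fin n)).Adj u w := hwu.symm
  have hwv' : (⊤ : SimpleGraph (Fin n)).Adj w v := hwv
  refine ⟨(show (⊤ : SimpleGraph (Fin n)).Adj u v from huv).toWalk,
    .cons huw (.cons hwv' .nil), ?_, ?_, fun h => ?_, ?_, ?_, ?_⟩
  · exact .of_adj _
  · simp [huv, hwv, hwu.symm]
  · simpa using congrArg Walk.length h
  · simp [IsRainbowWalk]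
  · simpa [IsRainbowWalk] using hc
  · simp

lemma rc2_top_le {n r : ℕ} (hn : 3 ≤ n) (hr : 4 ≤ r) : rc2 (⊤ : SimpleGraph (Fin n)) ≤ r :=
  Nat.sInf_le
    ⟨_, (rainbowTwoConnectedColouring_parityColouring hn).comp (Fin.castLE_injective hr)⟩

theorem TwoConnected.le_ncard_edgeSet [Fintype V] (hG : TwoConnected G) {r : ℕ}
    (hr : rc2 G ≤ r) :
    (6 / 5 : ℝ) * Fintype.card V - ((r : ℝ) * (r - 1)) / 5 ≤ (G.edgeSet.ncard : ℝ) := by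
  classical
  obtain ⟨col, hcol⟩ := hG.exists_rainbowTwoConnectedColouring_of_rc2_le hr
  have h : ((6 * Fintype.card V : ℕ) : ℝ) ≤ ((5 * #G.edgeFinset + r * (r - 1) : ℕ) : ℝ) :=
    Nat.cast_le.mpr (hG.six_mul_card_le hcol)
  rw [← coe_edgeFinset, Set.ncard_coe_finset]
  rcases Nat.eq_zero_or_pos r with rfl | hr₀
  · push_cast at h
    linarith
  · push_cast [Nat.cast_sub hr₀] at h
    linarith

theorem stmt4_general (r n : ℕ) (hr : 5 ≤ r) (hrn : r ≤ n - 1) :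
    (∀ G : SimpleGraph (Fin n), TwoConnected G → rc2 G ≤ r →
      (6 / 5 : ℝ) * n - ((r : ℝ) * (r - 1)) / 5 ≤ (G.edgeSet.ncard : ℝ)) ∧
    (6 / 5 : ℝ) * n - ((r : ℝ) * (r - 1)) / 5 ≤ (t2 n r : ℝ) := by
  have hbound (G : SimpleGraph (Fin n)) (hG : TwoConnected G) (hrc : rc2 G ≤ r) :
      (6 / 5 : ℝ) * n - ((r : ℝ) * (r - 1)) / 5 ≤ (G.edgeSet.ncard : ℝ) := by
    simpa using hG.le_ncard_edgeSet hrc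
  refine ⟨hbound, ?_⟩
  have hn3 : 3 ≤ n := by omega
  obtain ⟨G, hG, hrc, hm⟩ := Nat.sInf_mem (s := {m : ℕ | ∃ G : SimpleGraph (Fin n),
      TwoConnected G ∧ rc2 G ≤ r ∧ G.edgeSet.ncard = m})
    ⟨_, ⊤, twoConnected_top (by simpa using hn3), rc2_top_le hn3 (by omega), rfl⟩
  rw [t2, ← hm]
  exact hbound G hG hrc

/-- For 5 ≤ r ≤ n−1 and n > r(r−1)/6, every 2-connected graph on n
vertices with rc₂(G) ≤ r has at least (6/5)n − r(r−1)/5 edges; consequently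
t₂(n,r) ≥ (6/5)n − r(r−1)/5. -/
theorem stmt4 (r n : ℕ) (hr : 5 ≤ r) (hrn : r ≤ n - 1)
    (hn : ((r : ℝ) * (r - 1)) / 6 < (n : ℝ)) :
    (∀ G : SimpleGraph (Fin n), TwoConnected G → rc2 G ≤ r →
      (6 / 5 : ℝ) * n - ((r : ℝ) * (r - 1)) / 5 ≤ (G.edgeSet.ncard : ℝ)) ∧
    (6 / 5 : ℝ) * n - ((r : ℝ) * (r - 1)) / 5 ≤ (t2 n r : ℝ) :=
  stmt4_general r n hr hrn
end

section
/- Let r ≥ 2, let G be a 2-connected graph that is not a cycle, and suppose G admits a rainbow 2-connected edge-colouring using at most r colours. Let V₂ denote the set of vertices of G of degree exactly two. Then the number of vertices of V₂ that lie in a connected component of the induced subgraph G[V₂] having at least two vertices is at most r(r−1)/2. -/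
open SimpleGraph

/-!
Map every vertex of degree two to the set of colours of its two edges. If such a vertex `v` has a
neighbour `v'` of degree two, then the two rainbow paths from `v'` to any `t` leave `v'` through
different neighbours, so one of them runs `v' v y …` through both edges at `v`: these get
different colours. For two such vertices `a ≠ b` some edge `z b` has a colour missing at `a`. If
`a`, `b` are not adjacent, take the last edge of a rainbow path `a' a y … z b` from a degree-two
neighbour `a'` of `a`. If they are adjacent, take the last edge of a rainbow path `a y … z b` with
`y ≠ b`: its colour differs from that of `a y` by rainbowness and from that of `a b` by the
previous observation at `b`. So these vertices are mapped injectively to two-element sets of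
colours.
-/

namespace SimpleGraph

variable {V α : Type*} {G : SimpleGraph V} [G.LocallyFinite]

theorem neighborFinset_eq_pair_of_degree_eq_two [DecidableEq V] {v x y : V}
    (hv : G.degree v = 2) (hx : G.Adj v x) (hy : G.Adj v y) (hxy : x ≠ y) :
    G.neighborFinset v = {x, y} :=
  (Finset.eq_of_subset_of_card_le (by simp [Finset.insert_subset_iff, hx, hy])
    (by rw [card_neighborFinset_eq_degree, hv, Finset.card_pair hxy])).symm

theorem eq_or_eq_of_degree_eq_two_s5 {v x y z : V} (hv : G.degree v = 2) (hx : G.Adj v x)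
    (hy : G.Adj v y) (hxy : x ≠ y) (hz : G.Adj v z) : z = x ∨ z = y := by
  classical
  have hz : z ∈ G.neighborFinset v := (G.mem_neighborFinset v z).2 hz
  simpa [neighborFinset_eq_pair_of_degree_eq_two hv hx hy hxy] using hz

theorem exists_adj_ne_of_degree_eq_two {v : V} (hv : G.degree v = 2) (w : V) :
    ∃ y, G.Adj v y ∧ y ≠ w := by
  obtain ⟨y, hy, hyw⟩ := Finset.exists_mem_ne (s := G.neighborFinset v)
    (by rw [card_neighborFinset_eq_degree, hv]; norm_num) w
  exact ⟨y, (G.mem_neighborFinset v y).1 hy, hyw⟩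

variable (G) in
/-- The vertices lying in components of `G[V₂]` with at least two vertices. -/
def degTwoAdjDegTwo : Set V :=
  {v | G.degree v = 2 ∧ ∃ w, G.Adj v w ∧ G.degree w = 2}

variable (G) in
def edgeColours [DecidableEq α] (col : Sym2 V → α) (v : V) : Finset α :=
  (G.neighborFinset v).image fun w => col s(v, w)

theorem edgeColours_eq_pair [DecidableEq α] {col : Sym2 V → α} {v x y : V}
    (hv : G.degree v = 2) (hx : G.Adj v x) (hy : G.Adj v y) (hxy : x ≠ y) :
    G.edgeColours col v = {col s(v, x), col s(v, y)} := by
  classical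
  rw [edgeColours, neighborFinset_eq_pair_of_degree_eq_two hv hx hy hxy, Finset.image_insert,
    Finset.image_singleton]

end SimpleGraph

namespace RainbowTwoConnectedColouring

open SimpleGraph

variable {V α : Type*} {G : SimpleGraph V} [G.LocallyFinite] {col : Sym2 V → α}

theorem exists_rainbow_path_cons_s5 (hcol : RainbowTwoConnectedColouring G col) {s t w : V}
    (hs : G.degree s = 2) (hst : s ≠ t) (hw : G.Adj s w) :
    ∃ p : G.Walk w t, (Walk.cons hw p).IsPath ∧ IsRainbowWalk col (Walk.cons hw p) := by
  obtain ⟨p, q, hp, hq, hpq, hrp, hrq, hdisj⟩ := hcol s t hst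
  cases p with
  | nil => exact absurd rfl hst
  | @cons _ a _ ha p =>
  cases q with
  | nil => exact absurd rfl hst
  | @cons _ b _ hb q =>
  have hab : a ≠ b := by
    rintro rfl
    obtain rfl : a = t := (hdisj a (by simp) (by simp)).resolve_left (G.ne_of_adj ha).symm
    rw [(Walk.isPath_iff_nil.1 ((Walk.cons_isPath_iff _ _).1 hp).1).eq_nil,
      (Walk.isPath_iff_nil.1 ((Walk.cons_isPath_iff _ _).1 hq).1).eq_nil] at hpq
    exact hpq rfl
  rcases eq_or_eq_of_degree_eq_two_s5 hs ha hb hab hw with rfl | rfl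
  exacts [⟨p, hp, hrp⟩, ⟨q, hq, hrq⟩]

theorem exists_rainbow_walk_through (hcol : RainbowTwoConnectedColouring G col) {u' u t : V}
    (hu' : G.degree u' = 2) (hadj : G.Adj u' u) (htu' : t ≠ u') (htu : t ≠ u) :
    ∃ y, G.Adj u y ∧ y ≠ u' ∧ ∃ P : G.Walk y t,
      (col s(u', u) :: col s(u, y) :: P.edges.map col).Nodup := by
  obtain ⟨p, -, hrainbow⟩ := hcol.exists_rainbow_path_cons_s5 hu' htu'.symm hadj
  cases p with
  | nil => exact absurd rfl htu
  | @cons _ y _ hy P =>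
  simp only [IsRainbowWalk, Walk.edges_cons, List.map_cons] at hrainbow
  refine ⟨y, hy, ?_, P, hrainbow⟩
  rintro rfl
  simp [Sym2.eq_swap] at hrainbow

theorem colour_ne_of_adj_degree_eq_two (hcol : RainbowTwoConnectedColouring G col) {v v' x : V}
    (hv : G.degree v = 2) (hv' : G.degree v' = 2) (hvv' : G.Adj v v') (hx : G.Adj v x)
    (hxv' : x ≠ v') : col s(v, v') ≠ col s(v, x) := by
  obtain ⟨y, hy, hyv', _, hP⟩ :=
    hcol.exists_rainbow_walk_through hv' hvv'.symm hxv' (G.ne_of_adj hx).symm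
  obtain rfl : y = x := (eq_or_eq_of_degree_eq_two_s5 hv hvv' hx hxv'.symm hy).resolve_left hyv'
  rw [Sym2.eq_swap]
  simp only [List.nodup_cons, List.mem_cons] at hP
  exact fun h => hP.1 (.inl h)

theorem injOn_colour_of_mem_degTwoAdjDegTwo (hcol : RainbowTwoConnectedColouring G col) {v : V}
    (hv : v ∈ G.degTwoAdjDegTwo) : Set.InjOn (fun w => col s(v, w)) (G.neighborSet v) := by
  obtain ⟨hv, v', hvv', hv'⟩ := hv
  intro x hx y hy hxy
  by_contra hne
  rcases eq_or_eq_of_degree_eq_two_s5 hv hx hy hne hvv' with rfl | rfl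
  · exact hcol.colour_ne_of_adj_degree_eq_two hv hv' hvv' hy (Ne.symm hne) hxy
  · exact hcol.colour_ne_of_adj_degree_eq_two hv hv' hvv' hx hne hxy.symm

theorem card_edgeColours [DecidableEq α] (hcol : RainbowTwoConnectedColouring G col) {v : V}
    (hv : v ∈ G.degTwoAdjDegTwo) : (G.edgeColours col v).card = 2 := by
  rw [edgeColours, Finset.card_image_of_injOn (by
    simpa using hcol.injOn_colour_of_mem_degTwoAdjDegTwo hv), card_neighborFinset_eq_degree, hv.1]

theorem exists_colour_not_mem_edgeColours_of_adj [DecidableEq α]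
    (hcol : RainbowTwoConnectedColouring G col)
    {a b : V} (ha : a ∈ G.degTwoAdjDegTwo) (hb : b ∈ G.degTwoAdjDegTwo) (hab : G.Adj a b) :
    ∃ z, G.Adj b z ∧ col s(b, z) ∉ G.edgeColours col a := by
  obtain ⟨y, hay, hyb⟩ := exists_adj_ne_of_degree_eq_two ha.1 b
  obtain ⟨p, hp, hrainbow⟩ := hcol.exists_rainbow_path_cons_s5 ha.1 (G.ne_of_adj hab) hay
  have hnil : ¬ p.Nil := Walk.not_nil_of_ne hyb
  have hlast := p.mk_penultimate_end_mem_edges hnil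
  have hza : p.penultimate ≠ a := fun h =>
    ((Walk.cons_isPath_iff _ _).1 hp).2 (h ▸ p.fst_mem_support_of_mem_edges hlast)
  refine ⟨p.penultimate, (p.adj_penultimate hnil).symm, ?_⟩
  rw [edgeColours_eq_pair ha.1 hay hab hyb, Finset.mem_insert, Finset.mem_singleton, not_or]
  constructor
  · simp only [IsRainbowWalk, Walk.edges_cons, List.map_cons, List.nodup_cons] at hrainbow
    rw [Sym2.eq_swap]
    exact fun h => hrainbow.1 (h ▸ List.mem_map_of_mem hlast)
  · rw [show s(a, b) = s(b, a) from Sym2.eq_swap]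
    exact fun h => hza (hcol.injOn_colour_of_mem_degTwoAdjDegTwo hb
      (p.adj_penultimate hnil).symm hab.symm h)

theorem exists_colour_not_mem_edgeColours_of_not_adj [DecidableEq α]
    (hcol : RainbowTwoConnectedColouring G col)
    {a b : V} (ha : a ∈ G.degTwoAdjDegTwo) (hab : a ≠ b) (hnadj : ¬ G.Adj a b) :
    ∃ z, G.Adj b z ∧ col s(b, z) ∉ G.edgeColours col a := by
  obtain ⟨a', haa', ha'⟩ := ha.2
  obtain ⟨y, hay, hya', P, hP⟩ :=
    hcol.exists_rainbow_walk_through ha' haa'.symm (by rintro rfl; exact hnadj haa') hab.symm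
  have hnil : ¬ P.Nil := Walk.not_nil_of_ne fun h => hnadj (h ▸ hay)
  have hlast := List.mem_map_of_mem (f := col) (P.mk_penultimate_end_mem_edges hnil)
  refine ⟨P.penultimate, (P.adj_penultimate hnil).symm, ?_⟩
  rw [Sym2.eq_swap] at hlast
  rw [edgeColours_eq_pair ha.1 haa' hay hya'.symm, Finset.mem_insert, Finset.mem_singleton]
  simp only [List.nodup_cons, List.mem_cons, not_or] at hP
  rintro (h | h)
  · exact hP.1.2 (by rw [Sym2.eq_swap, ← h]; exact hlast)
  · exact hP.2.1 (h ▸ hlast)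

theorem injOn_edgeColours [DecidableEq α] (hcol : RainbowTwoConnectedColouring G col) :
    Set.InjOn (G.edgeColours col) G.degTwoAdjDegTwo := by
  intro a ha b hb hF
  by_contra hab
  obtain ⟨z, hbz, hz⟩ := (em (G.Adj a b)).elim
    (hcol.exists_colour_not_mem_edgeColours_of_adj ha hb)
    (hcol.exists_colour_not_mem_edgeColours_of_not_adj ha hab)
  exact hz (hF ▸ Finset.mem_image_of_mem _ ((G.mem_neighborFinset b z).2 hbz))

theorem ncard_degTwoAdjDegTwo_le [Fintype α] (hcol : RainbowTwoConnectedColouring G col) :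
    G.degTwoAdjDegTwo.ncard ≤ (Fintype.card α).choose 2 := by
  classical
  calc G.degTwoAdjDegTwo.ncard
      ≤ ((Finset.univ : Finset α).powersetCard 2 : Set (Finset α)).ncard :=
        Set.ncard_le_ncard_of_injOn _ (fun v hv => by simpa using hcol.card_edgeColours hv)
          hcol.injOn_edgeColours (Finset.finite_toSet _)
    _ = (Fintype.card α).choose 2 := by
        rw [Set.ncard_coe_finset, Finset.card_powersetCard, Finset.card_univ]

end RainbowTwoConnectedColouring

theorem stmt5_general {V : Type*} [Fintype V] (G : SimpleGraph V) [DecidableRel G.Adj]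
    (r : ℕ) (col : Sym2 V → Fin r) (hcol : RainbowTwoConnectedColouring G col) :
    {v : V | ∃ hv : v ∈ {w : V | G.degree w = 2}, ∃ u : V,
        ∃ hu : u ∈ {w : V | G.degree w = 2}, u ≠ v ∧
        (G.induce {w : V | G.degree w = 2}).Reachable ⟨v, hv⟩ ⟨u, hu⟩}.ncard
      ≤ r * (r - 1) / 2 := by
  calc _ ≤ G.degTwoAdjDegTwo.ncard := Set.ncard_le_ncard <| by
        rintro v ⟨hv, u, hu, hne, ⟨p⟩⟩
        have hnil : ¬ p.Nil := Walk.not_nil_of_ne fun h => hne (congrArg Subtype.val h).symm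
        exact ⟨hv, p.snd, p.adj_snd hnil, p.snd.2⟩
    _ ≤ (Fintype.card (Fin r)).choose 2 := hcol.ncard_degTwoAdjDegTwo_le
    _ = r * (r - 1) / 2 := by rw [Fintype.card_fin, Nat.choose_two_right]

/-- If a 2-connected graph G that is not a cycle has a rainbow
2-connected colouring with at most r colours (r ≥ 2), then the number of
degree-2 vertices lying in a component of G[V₂] with at least two vertices is
at most r(r−1)/2. -/
theorem stmt5 {V : Type*} [Fintype V] [DecidableEq V] (G : SimpleGraph V) [DecidableRel G.Adj]
    (r : ℕ) (hr : 2 ≤ r) (hG : TwoConnected G)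
    (hnotcycle : ¬ (G.Connected ∧ ∀ v : V, G.degree v = 2))
    (col : Sym2 V → Fin r) (hcol : RainbowTwoConnectedColouring G col) :
    {v : V | ∃ hv : v ∈ {w : V | G.degree w = 2}, ∃ u : V,
        ∃ hu : u ∈ {w : V | G.degree w = 2}, u ≠ v ∧
        (G.induce {w : V | G.degree w = 2}).Reachable ⟨v, hv⟩ ⟨u, hu⟩}.ncard
      ≤ r * (r - 1) / 2 :=
  stmt5_general G r col hcol
end

section
/- Let 3 ≤ r ≤ n − 1, and let G be the graph on n vertices obtained from the complete graph K_{n−r+2} by attaching an (r−1)-ear (a path with r − 1 new edges and r − 2 new internal vertices) at two of its vertices. Then G is 2-connected, |E(G)| = C(n−r+2, 2) + r − 1, and rc₂(G) ≥ r. Consequently s₂(n,r) ≥ C(n−r+2, 2) + r − 1. -/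
open SimpleGraph

/-!
The ear `v 0, …, v ℓ` (with `ℓ = r - 1`) and the edge `v ℓ v 0` form a cycle `C` of length `r`.
Any two vertices lie on a common cycle: `C`, `C` with the edge `v ℓ v 0` replaced by a detour
through another vertex of `K`, or a triangle in `K`. So any two vertices are joined by two
internally disjoint paths; hence `G` is 2-connected, and colouring all edges differently is rainbow
2-connected.

For `rc₂ G ≥ r`, take a rainbow 2-connected colouring with at most `ℓ` colours. Interior ear
vertices have degree two, so a rainbow path that leaves `v k` towards `v (k + 1)` runs along the
ear to `v ℓ` and, having at most `ℓ` edges, then needs a single edge to reach its end in `K`.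
Applied to the pairs `v 1, v 0` and `v 1, v 2`, this shows that the edges of `C` other than
`v 0 v 1`, resp. other than `v 1 v 2`, have distinct colours. The pair `v 2, v 0` (or, if `ℓ = 2`,
a pigeonhole argument on the paths through the other vertices of `K`) separates the colours of
`v 0 v 1` and `v 1 v 2`, so `C` is rainbow and needs `r` colours. The bound on `s₂` follows by
transporting `G` to `Fin n`.
-/

namespace SimpleGraph

variable {V : Type*} {G : SimpleGraph V} {u w : V}

def HasTwoInternallyDisjointPaths (G : SimpleGraph V) (u w : V) : Prop :=
  ∃ p q : G.Walk u w, p.IsPath ∧ q.IsPath ∧ p ≠ q ∧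
    ∀ x ∈ p.support, x ∈ q.support → x = u ∨ x = w

theorem HasTwoInternallyDisjointPaths.symm (h : G.HasTwoInternallyDisjointPaths u w) :
    G.HasTwoInternallyDisjointPaths w u := by
  obtain ⟨p, q, hp, hq, hpq, hdisj⟩ := h
  refine ⟨p.reverse, q.reverse, hp.reverse, hq.reverse,
    fun h ↦ hpq (by simpa using congrArg Walk.reverse h), ?_⟩
  simpa [or_comm] using hdisj

namespace Walk

theorem exists_support_eq :
    ∀ (l : List V) {u : V}, (u :: l ++ [w]).IsChain G.Adj →
      ∃ p : G.Walk u w, p.support = u :: l ++ [w]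
  | [], _, h => ⟨cons h.rel nil, rfl⟩
  | _ :: l, _, h =>
    have ⟨p, hp⟩ := exists_support_eq l h.of_cons
    ⟨cons h.rel p, by simp [hp]⟩

theorem reachable_induce {s : Set V} (p : G.Walk u w) (hs : ∀ x ∈ p.support, x ∈ s) :
    (G.induce s).Reachable ⟨u, hs u p.start_mem_support⟩ ⟨w, hs w p.end_mem_support⟩ :=
  (p.connected_induce_support.preconnected ⟨u, p.start_mem_support⟩
    ⟨w, p.end_mem_support⟩).map (G.induceHomOfLE hs).toHom

theorem edges_eq_singleton_of_length_le_one (p : G.Walk u w) (huw : u ≠ w)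
    (hp : p.length ≤ 1) : p.edges = [s(u, w)] := by
  cases p with
  | nil => exact absurd rfl huw
  | cons h q =>
    cases q with
    | nil => rfl
    | cons => simp at hp

theorem IsPath.snd_ne_snd {p q : G.Walk u w} (hp : p.IsPath) (hq : q.IsPath) (hpq : p ≠ q)
    (hdisj : ∀ x ∈ p.support, x ∈ q.support → x = u ∨ x = w) : p.snd ≠ q.snd := by
  intro hsnd
  have huw : u ≠ w := by
    rintro rfl
    rw [eq_nil_iff_nil.2 (isPath_iff_nil.1 hp), eq_nil_iff_nil.2 (isPath_iff_nil.1 hq)] at hpq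
    exact hpq rfl
  have hpw : p.snd = w := by
    have hq' : p.snd ∈ q.support := hsnd ▸ q.getVert_mem_support 1
    refine (hdisj _ (p.getVert_mem_support 1) hq').resolve_left ?_
    exact (p.adj_snd (not_nil_of_ne huw)).ne.symm
  have hpe := mk_start_snd_mem_edges (p := p) (not_nil_of_ne huw)
  have hqe := mk_start_snd_mem_edges (p := q) (not_nil_of_ne huw)
  rw [hpw] at hpe
  rw [← hsnd, hpw] at hqe
  exact hpq ((hp.eq_adj_toWalk_of_mem_edges hpe).trans (hq.eq_adj_toWalk_of_mem_edges hqe).symm)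

end Walk

theorem hasTwoInternallyDisjointPaths_of_isChain {A B : List V}
    (hA : (u :: A ++ [w]).IsChain G.Adj) (hB : (w :: B ++ [u]).IsChain G.Adj)
    (hnodup : (u :: A ++ w :: B).Nodup) (hne : A ++ B ≠ []) :
    G.HasTwoInternallyDisjointPaths u w := by
  replace hB : (u :: B.reverse ++ [w]).IsChain G.Adj := by
    simpa [List.isChain_reverse, G.adj_comm] using List.isChain_reverse.2 hB
  obtain ⟨p, hp⟩ := Walk.exists_support_eq A hA
  obtain ⟨q, hq⟩ := Walk.exists_support_eq B.reverse hB
  rw [List.cons_append, List.nodup_cons, List.nodup_append] at hnodup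
  simp only [List.mem_append, List.mem_cons, not_or, List.nodup_cons] at hnodup
  refine ⟨p, q, ?_, ?_, ?_, ?_⟩
  · rw [Walk.isPath_def, hp]
    simp only [List.nodup_cons, List.nodup_append]
    grind
  · rw [Walk.isPath_def, hq]
    simp only [List.nodup_cons, List.nodup_append, List.nodup_reverse, List.mem_reverse]
    grind
  · intro hpq
    have hArev : A = B.reverse := by
      have := congrArg Walk.support hpq
      rw [hp, hq] at this
      simpa using this
    obtain ⟨x, hx⟩ := List.exists_mem_of_ne_nil _ hne
    grind
  · intro x hxp hxq
    rw [hp] at hxp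
    rw [hq] at hxq
    simp only [List.mem_cons, List.mem_append, List.mem_reverse] at hxp hxq
    grind

theorem isChain_map_range' {c : ℕ → V} {L : ℕ} (hadj : ∀ t < L, G.Adj (c t) (c (t + 1))) :
    ∀ {a d : ℕ}, a + d ≤ L + 1 → ((List.range' a d).map c).IsChain G.Adj
  | _, 0, _ => by simp
  | _, 1, _ => by simp
  | a, d + 2, had => by
    rw [List.range'_succ, List.map_cons, List.range'_succ, List.map_cons, List.isChain_cons_cons,
      ← List.map_cons, ← List.range'_succ]
    exact ⟨hadj a (by omega), isChain_map_range' hadj (by omega)⟩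

theorem hasTwoInternallyDisjointPaths_of_cycle {c : ℕ → V} {L : ℕ}
    (hadj : ∀ t < L, G.Adj (c t) (c (t + 1))) (hclose : G.Adj (c L) (c 0))
    (hinj : Set.InjOn c (Set.Iic L)) {i j : ℕ} (hij : i < j) (hj : j ≤ L) (hL : 2 ≤ L) :
    G.HasTwoInternallyDisjointPaths (c i) (c j) := by
  refine hasTwoInternallyDisjointPaths_of_isChain (A := (List.range' (i + 1) (j - i - 1)).map c)
    (B := (List.range' (j + 1) (L - j) ++ List.range' 0 i).map c) ?_ ?_ ?_ ?_
  · have : c i :: (List.range' (i + 1) (j - i - 1)).map c ++ [c j] =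
        (List.range' i (j - i + 1)).map c := by
      rw [show j - i + 1 = (j - i - 1) + 1 + 1 by omega, List.range'_succ, List.range'_concat,
        show i + 1 + 1 * (j - i - 1) = j by omega]
      simp
    rw [this]
    exact isChain_map_range' hadj (by omega)
  · have : c j :: (List.range' (j + 1) (L - j) ++ List.range' 0 i).map c ++ [c i] =
        (List.range' j (L - j + 1)).map c ++ (List.range' 0 (i + 1)).map c := by
      rw [List.range'_succ, List.range'_concat]
      simp
    rw [this, List.isChain_append]
    refine ⟨isChain_map_range' hadj (by omega), isChain_map_range' hadj (by omega), ?_⟩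
    simp only [List.getLast?_map, List.head?_map, List.getLast?_range', List.head?_range']
    simp only [Nat.add_eq_zero_iff, one_ne_zero, and_false, if_false, Option.map_some,
      Option.mem_def, Option.some.injEq, forall_eq']
    rwa [show j + (L - j + 1) - 1 = L by omega]
  · rw [show c i :: (List.range' (i + 1) (j - i - 1)).map c ++
        c j :: (List.range' (j + 1) (L - j) ++ List.range' 0 i).map c =
        (i :: List.range' (i + 1) (j - i - 1) ++ j :: (List.range' (j + 1) (L - j) ++
          List.range' 0 i)).map c by simp]
    refine List.Nodup.map_on ?_ ?_
    · simp only [List.mem_cons, List.mem_append, List.mem_range'_1]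
      intro x hx y hy hxy
      exact hinj (by simp; omega) (by simp; omega) hxy
    · simp [List.nodup_append, List.nodup_range']
      grind
  · simp
    omega

end SimpleGraph

section

variable {V : Type*} {G : SimpleGraph V} {u w : V} {α : Type*} {col : Sym2 V → α}

theorem twoConnected_of_hasTwoInternallyDisjointPaths [Fintype V] (hV : 3 ≤ Fintype.card V)
    (h : ∀ u w, u ≠ w → G.HasTwoInternallyDisjointPaths u w) : TwoConnected G := by
  refine ⟨hV, fun x ↦ (connected_iff _).2 ⟨?_, ?_⟩⟩
  · rintro ⟨a, ha⟩ ⟨b, hb⟩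
    obtain rfl | hab := eq_or_ne a b
    · rfl
    obtain ⟨p, q, -, -, -, hdisj⟩ := h a b hab
    have hxa : x ≠ a := Ne.symm ha
    have hxb : x ≠ b := Ne.symm hb
    by_cases hxp : x ∈ p.support
    · have hxq : x ∉ q.support := fun hxq ↦ (hdisj x hxp hxq).elim hxa hxb
      exact q.reachable_induce fun y hy ↦ by rintro rfl; exact hxq hy
    · exact p.reachable_induce fun y hy ↦ by rintro rfl; exact hxp hy
  · obtain ⟨y, hy⟩ := Fintype.exists_ne_of_one_lt_card (by omega) x
    exact ⟨⟨y, hy⟩⟩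

theorem rainbowTwoConnectedColouring_of_injective
    (hcol : Function.Injective col) (h : ∀ u w, u ≠ w → G.HasTwoInternallyDisjointPaths u w) :
    RainbowTwoConnectedColouring G col := by
  intro u w huw
  obtain ⟨p, q, hp, hq, hpq, hdisj⟩ := h u w huw
  exact ⟨p, q, hp, hq, hpq, hp.edges_nodup.map hcol, hq.edges_nodup.map hcol, hdisj⟩

theorem IsRainbowWalk.length_le [Fintype α] {p : G.Walk u w}
    (hp : IsRainbowWalk col p) : p.length ≤ Fintype.card α := by
  simpa using hp.length_le_card

namespace RainbowTwoConnectedColouring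

theorem exists_snd_ne (H : RainbowTwoConnectedColouring G col) (huw : u ≠ w) (c : V) :
    ∃ (a : V) (hua : G.Adj u a) (q : G.Walk a w), a ≠ c ∧ (q.cons hua).IsPath ∧
      IsRainbowWalk col (q.cons hua) := by
  obtain ⟨p, q, hp, hq, hpq, hrp, hrq, hdisj⟩ := H u w huw
  have hsnd := hp.snd_ne_snd hq hpq hdisj
  obtain ⟨P, hP, hrP, hPc⟩ : ∃ P : G.Walk u w, P.IsPath ∧ IsRainbowWalk col P ∧ P.snd ≠ c := by
    by_cases hpc : p.snd = c
    · exact ⟨q, hq, hrq, hpc ▸ hsnd.symm⟩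
    · exact ⟨p, hp, hrp, hpc⟩
  obtain ⟨a, hua, q, rfl⟩ := Walk.not_nil_iff.1 (Walk.not_nil_of_ne (p := P) huw)
  exact ⟨a, hua, q, by simpa using hPc, hP, hrP⟩

theorem exists_snd_eq (H : RainbowTwoConnectedColouring G col) (huw : u ≠ w) {a b : V}
    (hnbr : ∀ x, G.Adj u x → x = a ∨ x = b) :
    ∃ (hua : G.Adj u a) (q : G.Walk a w), (q.cons hua).IsPath ∧
      IsRainbowWalk col (q.cons hua) := by
  obtain ⟨x, hux, q, hxb, hq⟩ := H.exists_snd_ne huw b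
  obtain rfl := (hnbr x hux).resolve_right hxb
  exact ⟨hux, q, hq⟩

end RainbowTwoConnectedColouring

theorem le_rc2 {r : ℕ}
    (hex : ∃ (m : ℕ) (col : Sym2 V → Fin m), RainbowTwoConnectedColouring G col)
    (h : ∀ m < r, ∀ col : Sym2 V → Fin m, ¬ RainbowTwoConnectedColouring G col) : r ≤ rc2 G := by
  by_contra! hlt
  obtain ⟨col, hcol⟩ := Nat.sInf_mem hex
  exact h _ hlt col hcol

theorem ncard_edgeSet_le_s2 {n r : ℕ} {G : SimpleGraph (Fin n)} (hG : TwoConnected G)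
    (hr : r ≤ rc2 G) : G.edgeSet.ncard ≤ s2 n r := by
  classical
  refine le_csSup ⟨n.choose 2, ?_⟩ ⟨G, hG, hr, rfl⟩
  rintro _ ⟨G', -, -, rfl⟩
  rw [← coe_edgeFinset, Set.ncard_coe_finset]
  simpa using G'.card_edgeFinset_le_card_choose_two

end

theorem Fintype.eq_of_ne_of_ne_of_card_le_two {α : Type*} [Fintype α]
    (hα : Fintype.card α ≤ 2) {a b c : α} (hab : a ≠ b) (hca : c ≠ a) : c = b := by
  by_contra hcb
  have := List.Nodup.length_le_card (l := [a, b, c]) (by simp [hab, hca.symm, Ne.symm hcb])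
  simp only [List.length_cons, List.length_nil, zero_add, Nat.reduceAdd] at this
  omega

namespace SimpleGraph

variable {V : Type*}

/-- `G` is a complete graph on `K` with an `ℓ`-ear `v 0, v 1, …, v ℓ` attached at `v 0, v ℓ ∈ K`,
and has no further vertices. -/
structure IsCliqueWithEar (G : SimpleGraph V) (K : Set V) (ℓ : ℕ) (v : ℕ → V) : Prop where
  two_le : 2 ≤ ℓ
  three_le_ncard : 3 ≤ K.ncard
  injOn : Set.InjOn v (Set.Iic ℓ)
  start_mem : v 0 ∈ K
  end_mem : v ℓ ∈ K
  not_mem : ∀ i ∈ Set.Ioo 0 ℓ, v i ∉ K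
  covers : ∀ x, x ∈ K ∨ x ∈ v '' Set.Ioo 0 ℓ
  adj_iff : ∀ a b, G.Adj a b ↔ (a ∈ K ∧ b ∈ K ∧ a ≠ b) ∨ ∃ i < ℓ, s(a, b) = s(v i, v (i + 1))

namespace IsCliqueWithEar

variable {G : SimpleGraph V} {K : Set V} {ℓ : ℕ} {v : ℕ → V}

theorem of_card [Fintype V] (hℓ : 2 ≤ ℓ) (hK : 3 ≤ K.ncard)
    (hcard : Fintype.card V = K.ncard + (ℓ - 1)) (hinj : Set.InjOn v (Set.Iic ℓ))
    (h₀ : v 0 ∈ K) (hℓK : v ℓ ∈ K) (hnot : ∀ i ∈ Set.Ioo 0 ℓ, v i ∉ K)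
    (hadj : ∀ a b, G.Adj a b ↔
      (a ∈ K ∧ b ∈ K ∧ a ≠ b) ∨ ∃ i < ℓ, s(a, b) = s(v i, v (i + 1))) :
    G.IsCliqueWithEar K ℓ v where
  two_le := hℓ
  three_le_ncard := hK
  injOn := hinj
  start_mem := h₀
  end_mem := hℓK
  not_mem := hnot
  covers x := by
    have hdisj : Disjoint K (v '' Set.Ioo 0 ℓ) := by
      rw [Set.disjoint_right]
      rintro _ ⟨i, hi, rfl⟩
      exact hnot i hi
    have huniv : K ∪ v '' Set.Ioo 0 ℓ = Set.univ := by
      refine Set.eq_of_subset_of_ncard_le (Set.subset_univ _) ?_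
      rw [Set.ncard_univ, Nat.card_eq_fintype_card, hcard, Set.ncard_union_eq hdisj,
        (hinj.mono fun i hi ↦ Set.mem_Iic.2 hi.2.le).ncard_image, Set.ncard_Ioo_nat]
      omega
    have hx : x ∈ K ∪ v '' Set.Ioo 0 ℓ := huniv ▸ Set.mem_univ x
    exact hx
  adj_iff := hadj

theorem comap {W : Type*} (h : G.IsCliqueWithEar K ℓ v) (e : W ≃ V) :
    (G.comap e).IsCliqueWithEar (e ⁻¹' K) ℓ (e.symm ∘ v) where
  two_le := h.two_le
  three_le_ncard := by
    rw [Set.ncard_preimage_of_injective_subset_range e.injective (by simp)]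
    exact h.three_le_ncard
  injOn := e.symm.injective.comp_injOn h.injOn
  start_mem := by simpa using h.start_mem
  end_mem := by simpa using h.end_mem
  not_mem i hi := by simpa using h.not_mem i hi
  covers x := by
    rcases h.covers (e x) with hx | ⟨i, hi, hix⟩
    · exact .inl hx
    · exact .inr ⟨i, hi, by simp [hix]⟩
  adj_iff a b := by
    simp [h.adj_iff, Equiv.eq_symm_apply]

theorem apply_ne (h : G.IsCliqueWithEar K ℓ v) {i j : ℕ} (hi : i ≤ ℓ) (hj : j ≤ ℓ)
    (hij : i ≠ j) : v i ≠ v j :=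
  fun e ↦ hij (h.injOn (Set.mem_Iic.2 hi) (Set.mem_Iic.2 hj) e)

theorem apply_ne_of_mem (h : G.IsCliqueWithEar K ℓ v) {w : V} (hw : w ∈ K) (hw₀ : w ≠ v 0)
    (hwℓ : w ≠ v ℓ) {i : ℕ} (hi : i ≤ ℓ) : v i ≠ w := by
  rintro rfl
  obtain rfl | hi₀ := i.eq_zero_or_pos
  · exact hw₀ rfl
  obtain rfl | hiℓ := hi.eq_or_lt
  · exact hwℓ rfl
  · exact h.not_mem i ⟨hi₀, hiℓ⟩ hw

theorem adj_of_mem (h : G.IsCliqueWithEar K ℓ v) {a b : V} (ha : a ∈ K) (hb : b ∈ K)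
    (hab : a ≠ b) : G.Adj a b :=
  (h.adj_iff a b).2 (.inl ⟨ha, hb, hab⟩)

theorem adj_succ (h : G.IsCliqueWithEar K ℓ v) {i : ℕ} (hi : i < ℓ) : G.Adj (v i) (v (i + 1)) :=
  (h.adj_iff _ _).2 (.inr ⟨i, hi, rfl⟩)

theorem eq_or_eq_of_adj (h : G.IsCliqueWithEar K ℓ v) {k : ℕ} (hk : k ∈ Set.Ioo 0 ℓ) {b : V}
    (hb : G.Adj (v k) b) : b = v (k - 1) ∨ b = v (k + 1) := by
  rcases (h.adj_iff _ _).1 hb with ⟨hvk, -, -⟩ | ⟨i, hi, he⟩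
  · exact absurd hvk (h.not_mem k hk)
  have hk' : k ∈ Set.Iic ℓ := Set.mem_Iic.2 hk.2.le
  rcases Sym2.eq_iff.1 he with ⟨hki, rfl⟩ | ⟨hki, rfl⟩
  · obtain rfl := h.injOn hk' (Set.mem_Iic.2 hi.le) hki
    exact .inr rfl
  · obtain rfl := h.injOn hk' (Set.mem_Iic.2 hi) hki
    exact .inl rfl

theorem hasTwoInternallyDisjointPaths_apply (h : G.IsCliqueWithEar K ℓ v) {i j : ℕ}
    (hij : i < j) (hj : j ≤ ℓ) : G.HasTwoInternallyDisjointPaths (v i) (v j) :=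
  hasTwoInternallyDisjointPaths_of_cycle (fun _ ↦ h.adj_succ)
    (h.adj_of_mem h.end_mem h.start_mem
      (h.apply_ne le_rfl ℓ.zero_le (by have := h.two_le; omega)))
    h.injOn hij hj h.two_le

theorem hasTwoInternallyDisjointPaths_apply_of_mem (h : G.IsCliqueWithEar K ℓ v) {i : ℕ}
    (hi : i ∈ Set.Ioo 0 ℓ) {w : V} (hw : w ∈ K) : G.HasTwoInternallyDisjointPaths (v i) w := by
  by_cases hw₀ : w = v 0
  · exact hw₀ ▸ (h.hasTwoInternallyDisjointPaths_apply hi.1 hi.2.le).symm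
  by_cases hwℓ : w = v ℓ
  · exact hwℓ ▸ h.hasTwoInternallyDisjointPaths_apply hi.2 le_rfl
  -- the cycle `v 0, …, v ℓ, w`
  let c : ℕ → V := fun t ↦ if t ≤ ℓ then v t else w
  have hc : G.HasTwoInternallyDisjointPaths (c i) (c (ℓ + 1)) := by
    refine hasTwoInternallyDisjointPaths_of_cycle (L := ℓ + 1) (fun t ht ↦ ?_) ?_ ?_
      (by have := hi.2; omega) le_rfl (by have := h.two_le; omega)
    · obtain ht | rfl := Nat.lt_succ_iff_lt_or_eq.1 ht
      · simpa [c, ht.le, Nat.succ_le_of_lt ht] using h.adj_succ ht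
      · simpa [c] using h.adj_of_mem h.end_mem hw (Ne.symm hwℓ)
    · simpa [c] using h.adj_of_mem hw h.start_mem hw₀
    · intro a ha b hb hab
      simp only [Set.mem_Iic, c] at ha hb hab
      split_ifs at hab with ha' hb' hb'
      · exact h.injOn ha' hb' hab
      · exact absurd hab (h.apply_ne_of_mem hw hw₀ hwℓ ha')
      · exact absurd hab.symm (h.apply_ne_of_mem hw hw₀ hwℓ hb')
      · omega
  simpa [c, hi.2.le] using hc

theorem hasTwoInternallyDisjointPaths (h : G.IsCliqueWithEar K ℓ v) {x y : V} (hxy : x ≠ y) :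
    G.HasTwoInternallyDisjointPaths x y := by
  rcases h.covers x with hx | ⟨i, hi, rfl⟩ <;> rcases h.covers y with hy | ⟨j, hj, rfl⟩
  · obtain ⟨z, hz, hzxy⟩ := Set.exists_mem_notMem_of_ncard_lt_ncard (s := {x, y}) (t := K)
      (by have := h.three_le_ncard; rw [Set.ncard_pair hxy]; omega)
    simp only [Set.mem_insert_iff, Set.mem_singleton_iff, not_or] at hzxy
    refine hasTwoInternallyDisjointPaths_of_isChain (A := []) (B := [z]) ?_ ?_ ?_ (by simp)
    · simpa using h.adj_of_mem hx hy hxy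
    · simpa using ⟨h.adj_of_mem hy hz (Ne.symm hzxy.2), h.adj_of_mem hz hx hzxy.1⟩
    · simp [hxy, Ne.symm hzxy.1, Ne.symm hzxy.2]
  · exact (h.hasTwoInternallyDisjointPaths_apply_of_mem hj hx).symm
  · exact h.hasTwoInternallyDisjointPaths_apply_of_mem hi hy
  · obtain hij | hij := lt_or_gt_of_ne fun e ↦ hxy (congrArg v e)
    · exact h.hasTwoInternallyDisjointPaths_apply hij hj.2.le
    · exact (h.hasTwoInternallyDisjointPaths_apply hij hi.2.le).symm

theorem twoConnected [Fintype V] (h : G.IsCliqueWithEar K ℓ v) : TwoConnected G := by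
  refine twoConnected_of_hasTwoInternallyDisjointPaths ?_
    fun _ _ ↦ h.hasTwoInternallyDisjointPaths
  calc 3 ≤ K.ncard := h.three_le_ncard
    _ ≤ Fintype.card V := by simpa using Set.ncard_le_card K

theorem edgeSet_eq (h : G.IsCliqueWithEar K ℓ v) :
    G.edgeSet =
      Sym2.map ((↑) : K → V) '' Sym2.diagSetᶜ ∪ (fun i ↦ s(v i, v (i + 1))) '' Set.Iio ℓ := by
  ext e
  induction e using Sym2.ind with
  | _ a b =>
    rw [mem_edgeSet, h.adj_iff]
    simp only [ne_eq, Sym2.eq, Sym2.rel_iff', Prod.mk.injEq, Prod.swap_prod_mk, Set.mem_union,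
      Set.mem_image, Set.mem_compl_iff, Sym2.mem_diagSet, eq_comm, Sym2.exists,
      Sym2.mk_isDiag_iff, Sym2.map_mk, Subtype.exists, exists_and_right, Subtype.mk.injEq,
      exists_prop, Set.mem_Iio]
    refine or_congr_left ⟨fun ⟨ha, hb, hab⟩ ↦ ⟨a, ha, b, ⟨hb, hab⟩, .inl ⟨rfl, rfl⟩⟩, ?_⟩
    rintro ⟨x, hx, y, ⟨hy, hxy⟩, ⟨rfl, rfl⟩ | ⟨rfl, rfl⟩⟩
    exacts [⟨hx, hy, hxy⟩, ⟨hy, hx, Ne.symm hxy⟩]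

theorem ncard_edgeSet (h : G.IsCliqueWithEar K ℓ v) :
    G.edgeSet.ncard = K.ncard.choose 2 + ℓ := by
  have hℓ := h.two_le
  have hdisj : Disjoint (Sym2.map ((↑) : K → V) '' Sym2.diagSetᶜ)
      ((fun i ↦ s(v i, v (i + 1))) '' Set.Iio ℓ) := by
    rw [Set.disjoint_right]
    rintro _ ⟨i, hi, rfl⟩ ⟨e, -, he : Sym2.map _ e = s(v i, v (i + 1))⟩
    -- one endpoint of every ear edge is an interior vertex of the ear
    obtain ⟨j, hj, hjmem⟩ : ∃ j ∈ Set.Ioo 0 ℓ, v j ∈ s(v i, v (i + 1)) := by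
      obtain rfl | hi₀ := i.eq_zero_or_pos
      · exact ⟨1, ⟨one_pos, by omega⟩, Sym2.mem_mk_right _ _⟩
      · exact ⟨i, ⟨hi₀, hi⟩, Sym2.mem_mk_left _ _⟩
    rw [← he] at hjmem
    obtain ⟨x, -, hx⟩ := Sym2.mem_map.1 hjmem
    exact h.not_mem j hj (hx ▸ x.2)
  have hinj : Set.InjOn (fun i ↦ s(v i, v (i + 1))) (Set.Iio ℓ) := by
    intro i hi j hj hij
    simp only [Set.mem_Iio] at hi hj
    rcases Sym2.eq_iff.1 hij with ⟨e, -⟩ | ⟨e₁, e₂⟩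
    · exact h.injOn (Set.mem_Iic.2 hi.le) (Set.mem_Iic.2 hj.le) e
    · have := h.injOn (Set.mem_Iic.2 hi.le) (Set.mem_Iic.2 hj) e₁
      have := h.injOn (Set.mem_Iic.2 hi) (Set.mem_Iic.2 hj.le) e₂
      omega
  have : Finite K := (Set.finite_of_ncard_pos (by have := h.three_le_ncard; omega)).to_subtype
  rw [h.edgeSet_eq, Set.ncard_union_eq hdisj (Set.toFinite _), Set.ncard_image_of_injective _
    (Sym2.map.injective Subtype.val_injective), Sym2.ncard_diagSet_compl,
    Nat.card_coe_set_eq, hinj.ncard_image, Set.ncard_Iio_nat]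

theorem edges_eq_of_snd_ne (h : G.IsCliqueWithEar K ℓ v) {z : V} (hz : z ∈ K) (hzℓ : z ≠ v ℓ)
    {k : ℕ} (hk₀ : 0 < k) (hk : k ≤ ℓ) (P : G.Walk (v k) z) (hP : P.IsPath)
    (hsnd : P.snd ≠ v (k - 1)) (hlen : P.length ≤ ℓ - k + 1) :
    P.edges = (List.range' k (ℓ - k)).map (fun t ↦ s(v t, v (t + 1))) ++ [s(v ℓ, z)] := by
  obtain rfl | hkℓ := hk.eq_or_lt
  · simpa using P.edges_eq_singleton_of_length_le_one hzℓ.symm (by omega)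
  have hkz : v k ≠ z := fun e ↦ h.not_mem k ⟨hk₀, hkℓ⟩ (e ▸ hz)
  obtain ⟨b, hb, Q, rfl⟩ := Walk.not_nil_iff.1 (Walk.not_nil_of_ne (p := P) hkz)
  obtain rfl := (h.eq_or_eq_of_adj ⟨hk₀, hkℓ⟩ hb).resolve_left (by simpa using hsnd)
  have hQ := (Walk.cons_isPath_iff _ _).1 hP
  have hQsnd : Q.snd ≠ v (k + 1 - 1) :=
    fun e ↦ hQ.2 (by simpa [e] using Q.getVert_mem_support 1)
  rw [Walk.edges_cons, h.edges_eq_of_snd_ne hz hzℓ (by omega) hkℓ Q hQ.1 hQsnd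
    (by simp only [Walk.length_cons, add_le_add_iff_right] at hlen; omega),
    show ℓ - k = ℓ - (k + 1) + 1 by omega, List.range'_succ]
  rfl
termination_by ℓ - k

section Colouring

variable {α : Type*} {col : Sym2 V → α}

theorem nodup_colours_from_one [Fintype α] (h : G.IsCliqueWithEar K ℓ v)
    (H : RainbowTwoConnectedColouring G col) (hα : Fintype.card α ≤ ℓ) :
    (((List.range' 1 (ℓ - 1)).map (fun t ↦ s(v t, v (t + 1))) ++
      [s(v ℓ, v 0)]).map col).Nodup := by
  have hℓ := h.two_le
  obtain ⟨h12, Q, hP, hrain⟩ := H.exists_snd_eq (u := v 1) (w := v 0) (a := v 2) (b := v 0)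
    (h.apply_ne (by omega) (by omega) one_ne_zero)
    (fun x hx ↦ by simpa [or_comm] using h.eq_or_eq_of_adj ⟨one_pos, by omega⟩ hx)
  have hshape := h.edges_eq_of_snd_ne h.start_mem (h.apply_ne le_rfl (by omega) (by omega)).symm
    one_pos (by omega) _ hP (by simpa using h.apply_ne (by omega) (by omega) (by omega))
    (by have := hrain.length_le; omega)
  rw [IsRainbowWalk, hshape] at hrain
  exact hrain

theorem colour_zero_not_mem [Fintype α] (h : G.IsCliqueWithEar K ℓ v)
    (H : RainbowTwoConnectedColouring G col) (hα : Fintype.card α ≤ ℓ) :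
    col s(v 0, v 1) ∉
      ((List.range' 2 (ℓ - 2)).map (fun t ↦ s(v t, v (t + 1))) ++ [s(v ℓ, v 0)]).map col := by
  have hℓ := h.two_le
  obtain ⟨h10, R, hP, hrain⟩ := H.exists_snd_eq (u := v 1) (w := v 2) (a := v 0) (b := v 2)
    (h.apply_ne (by omega) (by omega) (by omega))
    (fun x hx ↦ by simpa using h.eq_or_eq_of_adj ⟨one_pos, by omega⟩ hx)
  have hR := (Walk.cons_isPath_iff _ _).1 hP
  have hshape := h.edges_eq_of_snd_ne h.start_mem (h.apply_ne le_rfl (by omega) (by omega)).symm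
    two_pos hℓ R.reverse hR.1.reverse
    (fun e ↦ hR.2 (by simpa [e] using R.reverse.getVert_mem_support 1))
    (by have := hrain.length_le; rw [Walk.length_cons] at this; rw [Walk.length_reverse]; omega)
  rw [IsRainbowWalk, Walk.edges_cons, List.map_cons, List.nodup_cons] at hrain
  rw [← hshape, Walk.edges_reverse, List.map_reverse, List.mem_reverse, Sym2.eq_swap]
  exact hrain.1

theorem colour_zero_ne_colour_one_of_three_le (h : G.IsCliqueWithEar K ℓ v)
    (H : RainbowTwoConnectedColouring G col) (hℓ : 3 ≤ ℓ) :
    col s(v 0, v 1) ≠ col s(v 1, v 2) := by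
  obtain ⟨h21, R, hP, hrain⟩ := H.exists_snd_eq (u := v 2) (w := v 0) (a := v 1) (b := v 3)
    (h.apply_ne (by omega) (by omega) (by omega))
    (fun x hx ↦ by simpa using h.eq_or_eq_of_adj ⟨two_pos, by omega⟩ hx)
  have hR := (Walk.cons_isPath_iff _ _).1 hP
  obtain ⟨m, h1m, R', rfl⟩ :=
    Walk.not_nil_iff.1
      (Walk.not_nil_of_ne (p := R) (h.apply_ne (by omega) (by omega) one_ne_zero))
  obtain rfl : m = v 0 := (h.eq_or_eq_of_adj ⟨one_pos, by omega⟩ h1m).resolve_right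
    fun e ↦ hR.2 (by subst e; exact List.mem_cons_of_mem _ R'.start_mem_support)
  obtain rfl : R' = .nil := Walk.eq_nil_iff_nil.2 (Walk.isPath_iff_nil.1 hR.1.of_cons)
  simpa [IsRainbowWalk, Sym2.eq_swap, eq_comm] using hrain

theorem colour_zero_ne_colour_one_of_eq_two [Fintype α] (h : G.IsCliqueWithEar K 2 v)
    (H : RainbowTwoConnectedColouring G col) (hα : Fintype.card α ≤ 2) :
    col s(v 0, v 1) ≠ col s(v 1, v 2) := by
  have h12 : col s(v 1, v 2) ≠ col s(v 2, v 0) := by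
    simpa using h.nodup_colours_from_one H hα
  have h02 : col s(v 0, v 1) ≠ col s(v 2, v 0) := by
    simpa using h.colour_zero_not_mem H hα
  intro h01
  -- edges from `v 0` and `v 2` to the other vertices of `K` all get the colour of `v 2 v 0`
  have hK : ∀ {y x : V} (hy : G.Adj (v 1) y) (Q : G.Walk y x), y ≠ x →
      col s(v 1, y) = col s(v 0, v 1) → IsRainbowWalk col (Q.cons hy) →
      col s(y, x) = col s(v 2, v 0) := by
    intro y x hy Q hyx hcol hrain
    have hQ := Q.edges_eq_singleton_of_length_le_one hyx
      (by have := hrain.length_le; rw [Walk.length_cons] at this; omega)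
    rw [IsRainbowWalk, Walk.edges_cons, hQ] at hrain
    exact Fintype.eq_of_ne_of_ne_of_card_le_two hα h02 (by simpa [hcol, eq_comm] using hrain)
  obtain ⟨m, h0m, Q, hm2, -, hrain⟩ :=
    H.exists_snd_ne (u := v 0) (h.apply_ne (by omega) le_rfl (by omega)) (v 2)
  have hQ := Q.edges_eq_singleton_of_length_le_one hm2
    (by have := hrain.length_le; rw [Walk.length_cons] at this; omega)
  rw [IsRainbowWalk, Walk.edges_cons, hQ] at hrain
  simp only [List.map_cons, List.map_nil, List.nodup_cons, List.mem_singleton] at hrain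
  rcases h.covers m with hm | ⟨i, hi, rfl⟩
  · have h1m : v 1 ≠ m := fun e ↦ h.not_mem 1 ⟨one_pos, one_lt_two⟩ (e ▸ hm)
    obtain ⟨h10, Q₀, -, hr₀⟩ := H.exists_snd_eq h1m (a := v 0) (b := v 2)
      (fun x hx ↦ by simpa using h.eq_or_eq_of_adj ⟨one_pos, one_lt_two⟩ hx)
    obtain ⟨h12, Q₂, -, hr₂⟩ := H.exists_snd_eq h1m (a := v 2) (b := v 0)
      (fun x hx ↦ by simpa [or_comm] using h.eq_or_eq_of_adj ⟨one_pos, one_lt_two⟩ hx)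
    have hc₀ := hK h10 Q₀ h0m.ne (by rw [Sym2.eq_swap]) hr₀
    have hc₂ := hK h12 Q₂ (Ne.symm hm2) h01.symm hr₂
    exact hrain.1 (by rw [hc₀, Sym2.eq_swap (a := m), hc₂])
  · obtain rfl : i = 1 := by have := hi.1; have := hi.2; omega
    exact hrain.1 h01

theorem colour_zero_ne_colour_one [Fintype α]
    (h : G.IsCliqueWithEar K ℓ v) (H : RainbowTwoConnectedColouring G col)
    (hα : Fintype.card α ≤ ℓ) : col s(v 0, v 1) ≠ col s(v 1, v 2) := by
  obtain hℓ | hℓ := h.two_le.eq_or_lt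
  · subst hℓ
    exact h.colour_zero_ne_colour_one_of_eq_two H hα
  · exact h.colour_zero_ne_colour_one_of_three_le H hℓ

theorem lt_card_of_rainbowTwoConnectedColouring [Fintype α]
    (h : G.IsCliqueWithEar K ℓ v) (H : RainbowTwoConnectedColouring G col) :
    ℓ < Fintype.card α := by
  by_contra! hα
  have hℓ := h.two_le
  have hcycle : (col s(v 0, v 1) ::
      ((List.range' 1 (ℓ - 1)).map (fun t ↦ s(v t, v (t + 1))) ++
        [s(v ℓ, v 0)]).map col).Nodup := by
    refine List.nodup_cons.2 ⟨?_, h.nodup_colours_from_one H hα⟩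
    rw [show ℓ - 1 = ℓ - 2 + 1 by omega, List.range'_succ]
    simpa [h.colour_zero_ne_colour_one H hα] using h.colour_zero_not_mem H hα
  have := hcycle.length_le_card
  simp only [List.map_append, List.map_map, List.map_cons, List.map_nil, List.length_cons,
    List.length_append, List.length_map, List.length_range', List.length_nil, zero_add,
    Order.add_one_le_iff] at this
  omega

theorem rainbowTwoConnectedColouring_equivFin [Fintype V] [DecidableEq V]
    (h : G.IsCliqueWithEar K ℓ v) :
    RainbowTwoConnectedColouring G (Fintype.equivFin (Sym2 V)) :=
  rainbowTwoConnectedColouring_of_injective (Fintype.equivFin _).injective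
    fun _ _ ↦ h.hasTwoInternallyDisjointPaths

theorem lt_rc2 [Fintype V] (h : G.IsCliqueWithEar K ℓ v) : ℓ < rc2 G := by
  classical
  exact le_rc2 ⟨_, _, h.rainbowTwoConnectedColouring_equivFin⟩ fun m hm col H ↦
    (h.lt_card_of_rainbowTwoConnectedColouring H).not_ge (by simpa using Nat.lt_succ_iff.1 hm)

end Colouring

end IsCliqueWithEar

end SimpleGraph

/-- For 3 ≤ r ≤ n − 1, the graph obtained from a complete graph on
a set K of n − r + 2 vertices by attaching an (r−1)-ear v 0, v 1, …, v (r−1)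
(with endpoints v 0, v (r−1) ∈ K) is 2-connected, has C(n−r+2, 2) + (r−1) edges,
and satisfies rc₂ ≥ r; consequently s₂(n,r) ≥ C(n−r+2, 2) + (r−1). -/
theorem stmt14 (n r : ℕ) (hr : 3 ≤ r) (hrn : r ≤ n - 1)
    {V : Type*} [Fintype V] (hcard : Fintype.card V = n)
    (K : Set V) (hK : K.ncard = n - r + 2)
    (v : ℕ → V)
    (hvinj : ∀ i j, i ≤ r - 1 → j ≤ r - 1 → v i = v j → i = j)
    (hv0 : v 0 ∈ K) (hvlast : v (r - 1) ∈ K)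
    (hvint : ∀ i, 0 < i → i < r - 1 → v i ∉ K)
    (G : SimpleGraph V)
    (hadj : ∀ a b : V, G.Adj a b ↔
      ((a ∈ K ∧ b ∈ K ∧ a ≠ b) ∨
       ∃ i, i + 1 ≤ r - 1 ∧ ({a, b} : Set V) = {v i, v (i + 1)})) :
    TwoConnected G ∧ G.edgeSet.ncard = Nat.choose (n - r + 2) 2 + (r - 1) ∧
      r ≤ rc2 G ∧ Nat.choose (n - r + 2) 2 + (r - 1) ≤ s2 n r := by
  have h : G.IsCliqueWithEar K (r - 1) v :=
    .of_card (by omega) (by omega) (by omega) (fun i hi j hj ↦ hvinj i j hi hj) hv0 hvlast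
      (fun i hi ↦ hvint i hi.1 hi.2)
      fun a b ↦ by simp only [hadj, Set.pair_eq_pair_iff, Sym2.eq_iff]; rfl
  let e : Fin n ≃ V := (Fintype.equivFinOfCardEq hcard).symm
  have he : (e ⁻¹' K).ncard = K.ncard :=
    Set.ncard_preimage_of_injective_subset_range e.injective (by simp)
  have hs2 := ncard_edgeSet_le_s2 (h.comap e).twoConnected (r := r)
    (by have := (h.comap e).lt_rc2; omega)
  refine ⟨h.twoConnected, by rw [h.ncard_edgeSet, hK], by have := h.lt_rc2; omega, ?_⟩
  rwa [(h.comap e).ncard_edgeSet, he, hK] at hs2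
end
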